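/- arXiv:2410.16578 — 9 statements merged into one kernel-verified Lean document; each statement's English description precedes it below -/
import Mathlib

section
/- For every integer n ≥ 3 and every pair (x, y) of vectors x = (x_{ij})_{1≤i<j≤n}, y = (y_{ij})_{1≤i<j≤n} in k^{n(n−1)/2} satisfying the multilinearized Fomin–Kirillov system for n, either x = 0 or y = 0. Consequently the Fomin–Kirillov algebra E_n admits no 2-truncated point modules. -/
/-- A pair of vectors `(x, y)` (indexed by pairs `i < j` in `Fin n`) satisfies the
multilinearized Fomin–Kirillov system for `n`. -/
def FKSystem (k : Type*) [Field k] (n : ℕ) (x y : Fin n → Fin n → k) : Prop :=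
  (∀ i j : Fin n, i < j → y i j * x i j = 0) ∧
  (∀ i j l m : Fin n, i < j → l < m → i ≠ l → i ≠ m → j ≠ l → j ≠ m →
    y i j * x l m - y l m * x i j = 0) ∧
  (∀ i j l : Fin n, i < j → j < l →
    y i j * x j l - y j l * x i l - y i l * x i j = 0) ∧
  (∀ i j l : Fin n, i < j → j < l →
    y j l * x i j - y i l * x j l - y i j * x i l = 0)

/-- Key algebraic lemma for a single triangle: either all `y`-values or all `x`-values
vanish. -/
lemma fk_triangle_key {k : Type*} [Field k] (a b c A B C : k)
    (h1 : A * a = 0) (h2 : B * b = 0) (h3 : C * c = 0)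
    (e3 : A * b - B * c - C * a = 0) (e4 : B * a - C * b - A * c = 0) :
    (A = 0 ∧ B = 0 ∧ C = 0) ∨ (a = 0 ∧ b = 0 ∧ c = 0) := by
  by_cases hA : A = 0
  · by_cases hB : B = 0
    · by_cases hC : C = 0
      · exact Or.inl ⟨hA, hB, hC⟩
      · -- C ≠ 0
        have hc : c = 0 := (mul_eq_zero.mp h3).resolve_left hC
        have ha : a = 0 := by
          have : C * a = 0 := by rw [hA, hB] at e3; linear_combination -e3
          exact (mul_eq_zero.mp this).resolve_left hC
        have hb : b = 0 := by
          have : C * b = 0 := by rw [hA, hB] at e4; linear_combination -e4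
          exact (mul_eq_zero.mp this).resolve_left hC
        exact Or.inr ⟨ha, hb, hc⟩
    · -- B ≠ 0
      have hb : b = 0 := (mul_eq_zero.mp h2).resolve_left hB
      have ha : a = 0 := by
        have : B * a = 0 := by rw [hA, hb] at e4; linear_combination e4
        exact (mul_eq_zero.mp this).resolve_left hB
      have hc : c = 0 := by
        have : B * c = 0 := by rw [hA, ha] at e3; linear_combination -e3
        exact (mul_eq_zero.mp this).resolve_left hB
      exact Or.inr ⟨ha, hb, hc⟩
  · -- A ≠ 0
    have ha : a = 0 := (mul_eq_zero.mp h1).resolve_left hA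
    have hb : b = 0 := by
      by_contra hb
      have hB : B = 0 := (mul_eq_zero.mp h2).resolve_right hb
      have : A * b = 0 := by rw [hB, ha] at e3; linear_combination e3
      exact hb ((mul_eq_zero.mp this).resolve_left hA)
    have hc : c = 0 := by
      have : A * c = 0 := by rw [ha, hb] at e4; linear_combination -e4
      exact (mul_eq_zero.mp this).resolve_left hA
    exact Or.inr ⟨ha, hb, hc⟩

/-- Triangle dichotomy for a sorted triple. -/
lemma fk_tri {k : Type*} [Field k] {n : ℕ} {x y : Fin n → Fin n → k}
    (h : FKSystem k n x y) {i j l : Fin n} (hij : i < j) (hjl : j < l) :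
    (y i j = 0 ∧ y j l = 0 ∧ y i l = 0) ∨ (x i j = 0 ∧ x j l = 0 ∧ x i l = 0) :=
  fk_triangle_key (x i j) (x j l) (x i l) (y i j) (y j l) (y i l)
    (h.1 i j hij) (h.1 j l hjl) (h.1 i l (hij.trans hjl))
    (h.2.2.1 i j l hij hjl) (h.2.2.2 i j l hij hjl)

/-- Symmetrization of an edge-indexed vector. -/
def fkSym {k : Type*} {n : ℕ} (z : Fin n → Fin n → k) (u v : Fin n) : k :=
  if u < v then z u v else z v u

lemma fkSym_of_lt {k : Type*} {n : ℕ} (z : Fin n → Fin n → k) {u v : Fin n}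
    (h : u < v) : fkSym z u v = z u v := if_pos h

lemma fkSym_of_gt {k : Type*} {n : ℕ} (z : Fin n → Fin n → k) {u v : Fin n}
    (h : v < u) : fkSym z u v = z v u := if_neg (asymm h)

/-- Triangle dichotomy for an arbitrary triple of pairwise distinct vertices. -/
lemma fk_tri' {k : Type*} [Field k] {n : ℕ} {x y : Fin n → Fin n → k}
    (h : FKSystem k n x y) {u v w : Fin n} (huv : u ≠ v) (huw : u ≠ w) (hvw : v ≠ w) :
    (fkSym y u v = 0 ∧ fkSym y u w = 0 ∧ fkSym y v w = 0) ∨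
    (fkSym x u v = 0 ∧ fkSym x u w = 0 ∧ fkSym x v w = 0) := by
  rcases lt_trichotomy u v with h1 | h1 | h1
  · rcases lt_trichotomy v w with h2 | h2 | h2
    · -- u < v < w
      simp only [fkSym_of_lt _ h1, fkSym_of_lt _ h2, fkSym_of_lt _ (h1.trans h2)]
      have := fk_tri h h1 h2; tauto
    · exact absurd h2 hvw
    · rcases lt_trichotomy u w with h3 | h3 | h3
      · -- u < w < v
        simp only [fkSym_of_lt _ h1, fkSym_of_lt _ h3, fkSym_of_gt _ h2]
        have := fk_tri h h3 h2; tauto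
      · exact absurd h3 huw
      · -- w < u < v
        simp only [fkSym_of_lt _ h1, fkSym_of_gt _ h3, fkSym_of_gt _ h2]
        have := fk_tri h h3 h1; tauto
  · exact absurd h1 huv
  · rcases lt_trichotomy u w with h2 | h2 | h2
    · -- v < u < w
      simp only [fkSym_of_gt _ h1, fkSym_of_lt _ h2, fkSym_of_lt _ (h1.trans h2)]
      have := fk_tri h h1 h2; tauto
    · exact absurd h2 huw
    · rcases lt_trichotomy v w with h3 | h3 | h3
      · -- v < w < u
        simp only [fkSym_of_gt _ h1, fkSym_of_gt _ h2, fkSym_of_lt _ h3]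
        have := fk_tri h h3 h2; tauto
      · exact absurd h3 hvw
      · -- w < v < u
        simp only [fkSym_of_gt _ h1, fkSym_of_gt _ h2, fkSym_of_gt _ h3]
        have := fk_tri h h3 h1; tauto

/-- For every `n ≥ 3`, any solution of the multilinearized Fomin–Kirillov system for `n`
has `x = 0` or `y = 0`; consequently `E_n` admits no 2-truncated point modules. -/
theorem fk_no_two_truncated_point_modules (k : Type*) [Field k] [IsAlgClosed k]
    (n : ℕ) (hn : 3 ≤ n) (x y : Fin n → Fin n → k) (h : FKSystem k n x y) :
    (∀ i j : Fin n, i < j → x i j = 0) ∨ (∀ i j : Fin n, i < j → y i j = 0) := by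
  by_contra hc
  push_neg at hc
  obtain ⟨⟨p, q, hpq, hx⟩, ⟨r, s, hrs, hy⟩⟩ := hc
  by_cases hpr : p = r
  · subst hpr
    by_cases hqs : q = s
    · subst hqs
      have := h.1 p q hpq
      exact hy ((mul_eq_zero.mp this).resolve_right hx)
    · -- shared vertex p = r, triangle {p, q, s}
      rcases fk_tri' h hpq.ne hrs.ne hqs with ⟨_, h2, _⟩ | ⟨h1, _, _⟩
      · rw [fkSym_of_lt _ hrs] at h2; exact hy h2
      · rw [fkSym_of_lt _ hpq] at h1; exact hx h1
  · by_cases hps : p = s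
    · subst hps
      -- r < p < q, triangle {r, p, q}
      rcases fk_tri' h hrs.ne (hrs.trans hpq).ne hpq.ne with ⟨h1, _, _⟩ | ⟨_, _, h3⟩
      · rw [fkSym_of_lt _ hrs] at h1; exact hy h1
      · rw [fkSym_of_lt _ hpq] at h3; exact hx h3
    · by_cases hqr : q = r
      · subst hqr
        -- p < q < s, triangle {p, q, s}
        rcases fk_tri' h hpq.ne (hpq.trans hrs).ne hrs.ne with ⟨_, _, h3⟩ | ⟨h1, _, _⟩
        · rw [fkSym_of_lt _ hrs] at h3; exact hy h3
        · rw [fkSym_of_lt _ hpq] at h1; exact hx h1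
      · by_cases hqs : q = s
        · subst hqs
          -- r < q, triangle {p, q, r}
          rcases fk_tri' h hpq.ne hpr hqr with ⟨_, _, h3⟩ | ⟨h1, _, _⟩
          · rw [fkSym_of_gt _ hrs] at h3; exact hy h3
          · rw [fkSym_of_lt _ hpq] at h1; exact hx h1
        · -- all four distinct
          have hypq : y p q = 0 := by
            rcases fk_tri' h hpq.ne hpr hqr with ⟨h1, _, _⟩ | ⟨h1, _, _⟩
            · rwa [fkSym_of_lt _ hpq] at h1
            · rw [fkSym_of_lt _ hpq] at h1; exact absurd h1 hx
          have hxrs : x r s = 0 := by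
            rcases fk_tri' h hrs.ne (Ne.symm hpr) (Ne.symm hps) with ⟨h1, _, _⟩ | ⟨h1, _, _⟩
            · rw [fkSym_of_lt _ hrs] at h1; exact absurd h1 hy
            · rwa [fkSym_of_lt _ hrs] at h1
          have := h.2.1 p q r s hpq hrs hpr hps hqr hqs
          rw [hypq, hxrs] at this
          simp at this
          rcases this with h1 | h1
          · exact hy h1
          · exact hx h1
end

section
/- For every integer n ≥ 3 and every integer d ≥ 2, there is no tuple (λ^0, …, λ^{d−1}) of nonzero vectors in k^{n(n−1)/2} such that for every 0 ≤ r ≤ d−2 the pair (λ^r, λ^{r+1}) satisfies the multilinearized Fomin–Kirillov system for n. Consequently the Fomin–Kirillov algebra E_n admits no truncated point modules of degree greater than 1. -/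
private lemma fk_key {k : Type*} [Field k] (a b c p q r : k)
    (h1 : p * a = 0) (h2 : q * b = 0) (h3 : r * c = 0)
    (h4 : p * b - q * c - r * a = 0) (h5 : q * a - r * b - p * c = 0)
    (h : p ≠ 0 ∨ q ≠ 0 ∨ r ≠ 0) : a = 0 ∧ b = 0 ∧ c = 0 := by
  rcases h with hp | hq | hr
  · have ha : a = 0 := (mul_eq_zero.mp h1).resolve_left hp
    have hb : b = 0 := by
      by_contra hb
      have hq0 : q = 0 := (mul_eq_zero.mp h2).resolve_right hb
      rw [hq0, ha] at h4
      have : p * b = 0 := by linear_combination h4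
      exact hb ((mul_eq_zero.mp this).resolve_left hp)
    have hc : c = 0 := by
      rw [ha, hb] at h5
      have : p * c = 0 := by linear_combination -h5
      exact (mul_eq_zero.mp this).resolve_left hp
    exact ⟨ha, hb, hc⟩
  · have hb : b = 0 := (mul_eq_zero.mp h2).resolve_left hq
    have ha : a = 0 := by
      by_contra ha
      have hp0 : p = 0 := (mul_eq_zero.mp h1).resolve_right ha
      rw [hp0, hb] at h5
      have : q * a = 0 := by linear_combination h5
      exact ha ((mul_eq_zero.mp this).resolve_left hq)
    have hc : c = 0 := by
      rw [ha, hb] at h4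
      have : q * c = 0 := by linear_combination -h4
      exact (mul_eq_zero.mp this).resolve_left hq
    exact ⟨ha, hb, hc⟩
  · have hc : c = 0 := (mul_eq_zero.mp h3).resolve_left hr
    have ha : a = 0 := by
      by_contra ha
      have hp0 : p = 0 := (mul_eq_zero.mp h1).resolve_right ha
      rw [hp0, hc] at h4
      have : r * a = 0 := by linear_combination -h4
      exact ha ((mul_eq_zero.mp this).resolve_left hr)
    have hb : b = 0 := by
      rw [ha, hc] at h5
      have : r * b = 0 := by linear_combination -h5
      exact (mul_eq_zero.mp this).resolve_left hr
    exact ⟨ha, hb, hc⟩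

/-- In any triple `i < j < l`, if `y` is nonzero on one of its three pairs, then `x`
vanishes on all three pairs. -/
private lemma fk_triple {k : Type*} [Field k] {n : ℕ} {x y : Fin n → Fin n → k}
    (hsys : FKSystem k n x y) {i j l : Fin n} (hij : i < j) (hjl : j < l)
    (h : y i j ≠ 0 ∨ y j l ≠ 0 ∨ y i l ≠ 0) :
    x i j = 0 ∧ x j l = 0 ∧ x i l = 0 := by
  obtain ⟨h1, h2, h3, h4⟩ := hsys
  exact fk_key (x i j) (x j l) (x i l) (y i j) (y j l) (y i l)
    (h1 i j hij) (h1 j l hjl) (h1 i l (hij.trans hjl))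
    (h3 i j l hij hjl) (h4 i j l hij hjl) h

/-- For every `n ≥ 3` and `d ≥ 2`, there is no tuple `(λ^0, …, λ^{d-1})` of nonzero vectors
such that each consecutive pair satisfies the multilinearized Fomin–Kirillov system for `n`;
consequently `E_n` admits no truncated point modules of degree greater than `1`. -/
theorem fk_no_truncated_point_modules (k : Type*) [Field k] [IsAlgClosed k]
    (n d : ℕ) (hn : 3 ≤ n) (hd : 2 ≤ d) :
    ¬ ∃ lam : ℕ → (Fin n → Fin n → k),
      (∀ r < d, ∃ i j : Fin n, i < j ∧ lam r i j ≠ 0) ∧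
      (∀ r, r + 2 ≤ d → FKSystem k n (lam r) (lam (r + 1))) := by
  rintro ⟨lam, hnz, hsys⟩
  have sys : FKSystem k n (lam 0) (lam 1) := hsys 0 (by omega)
  obtain ⟨i, j, hij, hx⟩ := hnz 0 (by omega)
  obtain ⟨a, b, hab, hy⟩ := hnz 1 (by omega)
  -- x_{ab} = 0
  have xab0 : lam 0 a b = 0 := by
    have := sys.1 a b hab
    exact (mul_eq_zero.mp this).resolve_left hy
  apply hx
  -- show lam 0 i j = 0 by case analysis on how {i,j} meets {a,b}
  by_cases hia : i = a
  · subst hia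
    by_cases hjb : j = b
    · subst hjb; exact xab0
    · rcases lt_trichotomy j b with h | h | h
      · exact (fk_triple sys hij h (Or.inr (Or.inr hy))).1
      · exact absurd h hjb
      · exact (fk_triple sys hab h (Or.inl hy)).2.2
  · by_cases hja : j = a
    · subst hja
      exact (fk_triple sys hij hab (Or.inr (Or.inl hy))).1
    · by_cases hib : i = b
      · subst hib
        exact (fk_triple sys hab hij (Or.inl hy)).2.1
      · by_cases hjb : j = b
        · subst hjb
          rcases lt_trichotomy i a with h | h | h
          · exact (fk_triple sys h hab (Or.inr (Or.inl hy))).2.2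
          · exact absurd h hia
          · exact (fk_triple sys h hij (Or.inr (Or.inr hy))).2.1
        · -- disjoint pairs
          have := sys.2.1 a b i j hab hij (Ne.symm hia) (Ne.symm hja)
            (Ne.symm hib) (Ne.symm hjb)
          rw [xab0, mul_zero, sub_zero] at this
          exact (mul_eq_zero.mp this).resolve_left hy
end

section
/- Let (x12, x13, x23) ∈ k³ be a nonzero vector and suppose (y12, y13, y23) ∈ k³ satisfies: y12·x12 = 0; y13·x13 = 0; y23·x23 = 0; y12·x23 − y23·x13 − y13·x12 = 0; and y23·x12 − y13·x23 − y12·x13 = 0. Then y12 = y13 = y23 = 0. Consequently the Fomin–Kirillov algebra E_3 admits no truncated point modules of degree greater than 1. -/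
/-- If `(x12, x13, x23)` is a nonzero vector and `(y12, y13, y23)` satisfies the
multilinearized relations of the Fomin–Kirillov algebra `E_3`, then `y = 0`;
consequently `E_3` admits no truncated point modules of degree greater than `1`. -/
theorem e3_no_truncated_point_modules (k : Type*) [Field k] [IsAlgClosed k]
    (x12 x13 x23 y12 y13 y23 : k)
    (hx : ¬ (x12 = 0 ∧ x13 = 0 ∧ x23 = 0))
    (h1 : y12 * x12 = 0) (h2 : y13 * x13 = 0) (h3 : y23 * x23 = 0)
    (h4 : y12 * x23 - y23 * x13 - y13 * x12 = 0)
    (h5 : y23 * x12 - y13 * x23 - y12 * x13 = 0) :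
    y12 = 0 ∧ y13 = 0 ∧ y23 = 0 := by
  have key : ∀ a b : k, a * b = 0 → b ≠ 0 → a = 0 := fun a b hab hb =>
    (mul_eq_zero.mp hab).resolve_right hb
  by_cases hx12 : x12 = 0
  · by_cases hx13 : x13 = 0
    · have hx23 : x23 ≠ 0 := fun h => hx ⟨hx12, hx13, h⟩
      have hy23 : y23 = 0 := key _ _ h3 hx23
      have hy12 : y12 = 0 := key _ _ (by linear_combination h4 + x13 * hy23 + y13 * hx12) hx23
      have hy13 : y13 = 0 := key _ _ (by linear_combination -h5 + x12 * hy23 - y12 * hx13) hx23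
      exact ⟨hy12, hy13, hy23⟩
    · have hy13 : y13 = 0 := key _ _ h2 hx13
      have hy12 : y12 = 0 := key _ _ (by linear_combination -h5 + y23 * hx12 - x23 * hy13) hx13
      exact ⟨hy12, hy13, key _ _ (by linear_combination -h4 + x23 * hy12 - x12 * hy13) hx13⟩
  · have hy12 : y12 = 0 := key _ _ h1 hx12
    by_cases hx13 : x13 = 0
    · have hy13 : y13 = 0 := key _ _ (by linear_combination -h4 + x23 * hy12 - y23 * hx13) hx12
      have hy23 : y23 = 0 := key _ _ (by linear_combination h5 + x23 * hy13 + x13 * hy12) hx12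
      exact ⟨hy12, hy13, hy23⟩
    · have hy13 : y13 = 0 := key _ _ h2 hx13
      have hy23 : y23 = 0 := key _ _ (by linear_combination -h4 + x23 * hy12 - x12 * hy13) hx13
      exact ⟨hy12, hy13, hy23⟩
end

section
/- Let n ≥ 3 and let S ⊆ {1, …, n} be a subset with |S| = m, where m ∈ {3, 4} and m ≤ n. Then the subalgebra of the Fomin–Kirillov algebra E_n generated by the generators {x_{pq} : p < q, p, q ∈ S} is isomorphic, as a graded k-algebra, to the Fomin–Kirillov algebra E_m. -/
noncomputable section

open FreeAlgebra

/-- Index set for the generators `x_{ij}` (`i < j`) of the Fomin–Kirillov algebra `E_n`. -/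
abbrev GenIdx (n : ℕ) := {p : Fin n × Fin n // p.1 < p.2}

/-- The defining relations of the Fomin–Kirillov algebra `E_n`. -/
inductive FKRel (k : Type*) [Field k] (n : ℕ) :
    FreeAlgebra k (GenIdx n) → FreeAlgebra k (GenIdx n) → Prop
  | sq (e : GenIdx n) : FKRel k n (ι k e * ι k e) 0
  | comm (e f : GenIdx n) (h1 : e.1.1 ≠ f.1.1) (h2 : e.1.1 ≠ f.1.2)
      (h3 : e.1.2 ≠ f.1.1) (h4 : e.1.2 ≠ f.1.2) :
      FKRel k n (ι k e * ι k f - ι k f * ι k e) 0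
  | tri1 (i j l : Fin n) (hij : i < j) (hjl : j < l) :
      FKRel k n (ι k ⟨(i, j), hij⟩ * ι k ⟨(j, l), hjl⟩ -
        ι k ⟨(j, l), hjl⟩ * ι k ⟨(i, l), hij.trans hjl⟩ -
        ι k ⟨(i, l), hij.trans hjl⟩ * ι k ⟨(i, j), hij⟩) 0
  | tri2 (i j l : Fin n) (hij : i < j) (hjl : j < l) :
      FKRel k n (ι k ⟨(j, l), hjl⟩ * ι k ⟨(i, j), hij⟩ -
        ι k ⟨(i, l), hij.trans hjl⟩ * ι k ⟨(j, l), hjl⟩ -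
        ι k ⟨(i, j), hij⟩ * ι k ⟨(i, l), hij.trans hjl⟩) 0

/-- The Fomin–Kirillov algebra `E_n` over `k`. -/
abbrev FK (k : Type*) [Field k] (n : ℕ) := RingQuot (FKRel k n)

/-- The generator `x_{ij}` of `E_n`. -/
def fkGen (k : Type*) [Field k] (n : ℕ) (e : GenIdx n) : FK k n :=
  RingQuot.mkAlgHom k (FKRel k n) (ι k e)

section Aux

variable (k : Type*) [Field k] {n m : ℕ} (S : Finset (Fin n)) (hcard : S.card = m)

lemma fk_rel_zero {x : FreeAlgebra k (GenIdx n)} (h : FKRel k n x 0) :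
    RingQuot.mkAlgHom k (FKRel k n) x = 0 := by
  rw [RingQuot.mkAlgHom_rel k h, map_zero]

lemma fkGen_mul (e f : GenIdx n) :
    fkGen k n e * fkGen k n f = RingQuot.mkAlgHom k (FKRel k n) (ι k e * ι k f) := by
  simp [fkGen, map_mul]

/-- The embedded generator index. -/
def embIdx (e : GenIdx m) : GenIdx n :=
  ⟨((S.orderIsoOfFin hcard e.1.1 : Fin n), (S.orderIsoOfFin hcard e.1.2 : Fin n)),
    Subtype.coe_lt_coe.mpr ((S.orderIsoOfFin hcard).strictMono e.2)⟩

lemma embIdx_injective_coord : Function.Injective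
    (fun x : Fin m => ((S.orderIsoOfFin hcard x : Fin n))) :=
  Subtype.coe_injective.comp (S.orderIsoOfFin hcard).injective

lemma emb_rel {x y : FreeAlgebra k (GenIdx m)} (h : FKRel k m x y) :
    (FreeAlgebra.lift k fun e => fkGen k n (embIdx S hcard e)) x =
      (FreeAlgebra.lift k fun e => fkGen k n (embIdx S hcard e)) y := by
  set σ : Fin m → Fin n := fun x => ((S.orderIsoOfFin hcard x : Fin n)) with hσ
  have hinj : Function.Injective σ := embIdx_injective_coord S hcard
  have hmono : StrictMono σ := fun a b hab =>
    Subtype.coe_lt_coe.mpr ((S.orderIsoOfFin hcard).strictMono hab)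
  induction h with
  | sq e =>
      simpa [map_mul, lift_ι_apply, fkGen_mul] using
        fk_rel_zero k (FKRel.sq (embIdx S hcard e))
  | comm e f h1 h2 h3 h4 =>
      have := fk_rel_zero k (FKRel.comm (n := n) (embIdx S hcard e) (embIdx S hcard f)
        (fun hc => h1 (hinj hc)) (fun hc => h2 (hinj hc))
        (fun hc => h3 (hinj hc)) (fun hc => h4 (hinj hc)))
      simpa [map_mul, map_sub, lift_ι_apply, fkGen, map_mul] using this
  | tri1 i j l hij hjl =>
      have := fk_rel_zero k (FKRel.tri1 (σ i) (σ j) (σ l) (hmono hij) (hmono hjl))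
      simpa [map_mul, map_sub, lift_ι_apply, fkGen, embIdx, map_mul, hσ] using this
  | tri2 i j l hij hjl =>
      have := fk_rel_zero k (FKRel.tri2 (σ i) (σ j) (σ l) (hmono hij) (hmono hjl))
      simpa [map_mul, map_sub, lift_ι_apply, fkGen, embIdx, map_mul, hσ] using this

/-- The embedding `E_m → E_n`. -/
def fkEmb : FK k m →ₐ[k] FK k n :=
  RingQuot.liftAlgHom k ⟨FreeAlgebra.lift k fun e => fkGen k n (embIdx S hcard e),
    fun _ _ h => emb_rel k S hcard h⟩

lemma fkEmb_gen (e : GenIdx m) :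
    fkEmb k S hcard (fkGen k m e) = fkGen k n (embIdx S hcard e) := by
  simp [fkEmb, fkGen, RingQuot.liftAlgHom_mkAlgHom_apply, lift_ι_apply]

/-- The projection map on generators. -/
def projGen (e : GenIdx n) : FK k m :=
  if h : e.1.1 ∈ S ∧ e.1.2 ∈ S then
    fkGen k m ⟨((S.orderIsoOfFin hcard).symm ⟨e.1.1, h.1⟩,
        (S.orderIsoOfFin hcard).symm ⟨e.1.2, h.2⟩),
      (S.orderIsoOfFin hcard).symm.strictMono (Subtype.mk_lt_mk.mpr e.2)⟩
  else 0


lemma projGen_pos (e : GenIdx n) (h1 : e.1.1 ∈ S) (h2 : e.1.2 ∈ S) :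
    projGen k S hcard e = fkGen k m ⟨((S.orderIsoOfFin hcard).symm ⟨e.1.1, h1⟩,
        (S.orderIsoOfFin hcard).symm ⟨e.1.2, h2⟩),
      (S.orderIsoOfFin hcard).symm.strictMono (Subtype.mk_lt_mk.mpr e.2)⟩ :=
  dif_pos ⟨h1, h2⟩

lemma projGen_zero (e : GenIdx n) (h : ¬(e.1.1 ∈ S ∧ e.1.2 ∈ S)) :
    projGen k S hcard e = 0 :=
  dif_neg h

lemma projGen_zero₁ (e : GenIdx n) (h : e.1.1 ∉ S) : projGen k S hcard e = 0 :=
  dif_neg (fun hc => h hc.1)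

lemma projGen_zero₂ (e : GenIdx n) (h : e.1.2 ∉ S) : projGen k S hcard e = 0 :=
  dif_neg (fun hc => h hc.2)

lemma proj_rel {x y : FreeAlgebra k (GenIdx n)} (h : FKRel k n x y) :
    (FreeAlgebra.lift k (projGen k S hcard)) x =
      (FreeAlgebra.lift k (projGen k S hcard)) y := by
  have hsm : ∀ {a b : Fin n} (ha : a ∈ S) (hb : b ∈ S), a < b →
      (S.orderIsoOfFin hcard).symm ⟨a, ha⟩ < (S.orderIsoOfFin hcard).symm ⟨b, hb⟩ :=
    fun ha hb hab => (S.orderIsoOfFin hcard).symm.strictMono (Subtype.mk_lt_mk.mpr hab)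
  induction h with
  | sq e =>
      simp only [map_mul, map_zero, lift_ι_apply]
      by_cases h : e.1.1 ∈ S ∧ e.1.2 ∈ S
      · rw [projGen_pos k S hcard e h.1 h.2, fkGen_mul]
        exact fk_rel_zero k (FKRel.sq _)
      · rw [projGen_zero k S hcard e h, zero_mul]
  | comm e f h1 h2 h3 h4 =>
      simp only [map_mul, map_sub, map_zero, lift_ι_apply]
      by_cases he : e.1.1 ∈ S ∧ e.1.2 ∈ S
      · by_cases hf : f.1.1 ∈ S ∧ f.1.2 ∈ S
        · rw [projGen_pos k S hcard e he.1 he.2, projGen_pos k S hcard f hf.1 hf.2,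
            fkGen_mul, fkGen_mul, ← map_sub]
          refine fk_rel_zero k (FKRel.comm _ _ ?_ ?_ ?_ ?_) <;>
            · intro hc
              have := (S.orderIsoOfFin hcard).symm.injective hc
              simp only [Subtype.mk.injEq] at this
              first
                | exact h1 this | exact h2 this | exact h3 this | exact h4 this
        · rw [projGen_zero k S hcard f hf]; simp
      · rw [projGen_zero k S hcard e he]; simp
  | tri1 i j l hij hjl =>
      simp only [map_mul, map_sub, map_zero, lift_ι_apply]
      by_cases hi : i ∈ S
      · by_cases hj : j ∈ S
        · by_cases hl : l ∈ S
          · rw [projGen_pos k S hcard ⟨(i, j), hij⟩ hi hj,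
              projGen_pos k S hcard ⟨(j, l), hjl⟩ hj hl,
              projGen_pos k S hcard ⟨(i, l), hij.trans hjl⟩ hi hl,
              fkGen_mul, fkGen_mul, fkGen_mul, ← map_sub, ← map_sub]
            exact fk_rel_zero k (FKRel.tri1 _ _ _ (hsm hi hj hij) (hsm hj hl hjl))
          · rw [projGen_zero₂ k S hcard ⟨(j, l), hjl⟩ hl,
              projGen_zero₂ k S hcard ⟨(i, l), hij.trans hjl⟩ hl]; simp
        · rw [projGen_zero₂ k S hcard ⟨(i, j), hij⟩ hj,
            projGen_zero₁ k S hcard ⟨(j, l), hjl⟩ hj]; simp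
      · rw [projGen_zero₁ k S hcard ⟨(i, j), hij⟩ hi,
          projGen_zero₁ k S hcard ⟨(i, l), hij.trans hjl⟩ hi]; simp
  | tri2 i j l hij hjl =>
      simp only [map_mul, map_sub, map_zero, lift_ι_apply]
      by_cases hi : i ∈ S
      · by_cases hj : j ∈ S
        · by_cases hl : l ∈ S
          · rw [projGen_pos k S hcard ⟨(i, j), hij⟩ hi hj,
              projGen_pos k S hcard ⟨(j, l), hjl⟩ hj hl,
              projGen_pos k S hcard ⟨(i, l), hij.trans hjl⟩ hi hl,
              fkGen_mul, fkGen_mul, fkGen_mul, ← map_sub, ← map_sub]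
            exact fk_rel_zero k (FKRel.tri2 _ _ _ (hsm hi hj hij) (hsm hj hl hjl))
          · rw [projGen_zero₂ k S hcard ⟨(j, l), hjl⟩ hl,
              projGen_zero₂ k S hcard ⟨(i, l), hij.trans hjl⟩ hl]; simp
        · rw [projGen_zero₂ k S hcard ⟨(i, j), hij⟩ hj,
            projGen_zero₁ k S hcard ⟨(j, l), hjl⟩ hj]; simp
      · rw [projGen_zero₁ k S hcard ⟨(i, j), hij⟩ hi,
          projGen_zero₁ k S hcard ⟨(i, l), hij.trans hjl⟩ hi]; simp

/-- The projection `E_n → E_m`. -/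
def fkProj : FK k n →ₐ[k] FK k m :=
  RingQuot.liftAlgHom k ⟨FreeAlgebra.lift k (projGen k S hcard),
    fun _ _ h => proj_rel k S hcard h⟩

lemma fkProj_gen (e : GenIdx n) :
    fkProj k S hcard (fkGen k n e) = FreeAlgebra.lift k (projGen k S hcard) (ι k e) := by
  simp [fkProj, fkGen, RingQuot.liftAlgHom_mkAlgHom_apply]

lemma fkProj_comp_fkEmb :
    (fkProj k S hcard).comp (fkEmb k S hcard) = AlgHom.id k (FK k m) := by
  apply RingQuot.ringQuot_ext'
  apply FreeAlgebra.hom_ext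
  funext e
  show fkProj k S hcard (fkEmb k S hcard (fkGen k m e)) = fkGen k m e
  rw [fkEmb_gen, fkProj_gen, lift_ι_apply]
  have h1 : (embIdx S hcard e).1.1 ∈ S := (S.orderIsoOfFin hcard e.1.1).2
  have h2 : (embIdx S hcard e).1.2 ∈ S := (S.orderIsoOfFin hcard e.1.2).2
  rw [projGen_pos k S hcard _ h1 h2]
  congr 1
  apply Subtype.ext
  have : ∀ (a : Fin m) (ha : ((S.orderIsoOfFin hcard a : Fin n)) ∈ S),
      (S.orderIsoOfFin hcard).symm ⟨(S.orderIsoOfFin hcard a : Fin n), ha⟩ = a := by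
    intro a ha
    have : (⟨(S.orderIsoOfFin hcard a : Fin n), ha⟩ : {x // x ∈ S}) =
        S.orderIsoOfFin hcard a := Subtype.ext rfl
    rw [this, OrderIso.symm_apply_apply]
  exact Prod.ext (this _ _) (this _ _)

lemma fkEmb_injective : Function.Injective (fkEmb k S hcard) := by
  intro a b hab
  have h2a := DFunLike.congr_fun (fkProj_comp_fkEmb k S hcard) a
  have h2b := DFunLike.congr_fun (fkProj_comp_fkEmb k S hcard) b
  simp only [AlgHom.coe_comp, Function.comp_apply, AlgHom.coe_id, id_eq] at h2a h2b
  rw [← h2a, ← h2b, hab]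

end Aux

/-- For `m ∈ {3,4}`, `m ≤ n`, and `S ⊆ {1,…,n}` of size `m`, the subalgebra of `E_n`
generated by the generators `x_{pq}` with `p, q ∈ S` is isomorphic, as a graded
`k`-algebra (an algebra isomorphism matching the degree-one generators), to `E_m`. -/
theorem fk_subalgebra_iso (k : Type*) [Field k] [IsAlgClosed k]
    (n m : ℕ) (hn : 3 ≤ n) (hm : m = 3 ∨ m = 4) (hmn : m ≤ n)
    (S : Finset (Fin n)) (hcard : S.card = m) :
    ∃ φ : FK k m ≃ₐ[k] (Algebra.adjoin k
        {x : FK k n | ∃ e : GenIdx n, (e.1.1 ∈ S ∧ e.1.2 ∈ S) ∧ x = fkGen k n e}),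
      ∀ e : GenIdx m, (φ (fkGen k m e) : FK k n) =
        fkGen k n ⟨((S.orderIsoOfFin hcard e.1.1 : Fin n),
            (S.orderIsoOfFin hcard e.1.2 : Fin n)),
          Subtype.coe_lt_coe.mpr ((S.orderIsoOfFin hcard).strictMono e.2)⟩ := by
  have hset : {x : FK k n | ∃ e : GenIdx n, (e.1.1 ∈ S ∧ e.1.2 ∈ S) ∧ x = fkGen k n e}
      = fkEmb k S hcard '' (Set.range (fkGen k m)) := by
    ext x
    constructor
    · rintro ⟨e, ⟨h1, h2⟩, rfl⟩
      refine ⟨fkGen k m ⟨((S.orderIsoOfFin hcard).symm ⟨e.1.1, h1⟩,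
          (S.orderIsoOfFin hcard).symm ⟨e.1.2, h2⟩),
          (S.orderIsoOfFin hcard).symm.strictMono (Subtype.mk_lt_mk.mpr e.2)⟩,
        ⟨_, rfl⟩, ?_⟩
      rw [fkEmb_gen]
      congr 1
      apply Subtype.ext
      apply Prod.ext <;> simp [embIdx]
    · rintro ⟨_, ⟨e, rfl⟩, rfl⟩
      exact ⟨embIdx S hcard e, ⟨(S.orderIsoOfFin hcard e.1.1).2,
        (S.orderIsoOfFin hcard e.1.2).2⟩, fkEmb_gen k S hcard e⟩
  have htop : Algebra.adjoin k (Set.range (fkGen k m)) = ⊤ := by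
    have hr : Set.range (fkGen k m) =
        RingQuot.mkAlgHom k (FKRel k m) '' Set.range (ι k) := by
      rw [← Set.range_comp]; rfl
    rw [hr, ← AlgHom.map_adjoin, FreeAlgebra.adjoin_range_ι, Algebra.map_top,
      AlgHom.range_eq_top]
    exact RingQuot.mkAlgHom_surjective k (FKRel k m)
  have hAdj : Algebra.adjoin k {x : FK k n | ∃ e : GenIdx n,
      (e.1.1 ∈ S ∧ e.1.2 ∈ S) ∧ x = fkGen k n e} = (fkEmb k S hcard).range := by
    rw [hset, ← AlgHom.map_adjoin, htop, Algebra.map_top]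
  refine ⟨(AlgEquiv.ofInjective (fkEmb k S hcard) (fkEmb_injective k S hcard)).trans
    (Subalgebra.equivOfEq _ _ hAdj.symm), fun e => ?_⟩
  have : ((Subalgebra.equivOfEq _ _ hAdj.symm
      (AlgEquiv.ofInjective (fkEmb k S hcard) (fkEmb_injective k S hcard)
        (fkGen k m e)) : Algebra.adjoin k _) : FK k n) =
      fkEmb k S hcard (fkGen k m e) := by
    rw [Subalgebra.equivOfEq_apply]
    exact AlgEquiv.ofInjective_apply (fkEmb k S hcard) (fkEmb_injective k S hcard) _
  rw [fkEmb_gen] at this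
  exact this
end
end

section
/- Let G be a finite simple graph on vertex set {1, …, n} with n ≥ 3 and at least one edge. If G is a disjoint union of complete graphs, then for d = 2 there is no d-truncated point module datum over the generalized Fomin–Kirillov algebra E_G; equivalently, E_G admits no 2-truncated point module. -/
noncomputable section

open FreeAlgebra

/-- The edges of a simple graph `G` on `Fin n`, as generator indices of `E_n`. -/
abbrev EdgeIdx (n : ℕ) (G : SimpleGraph (Fin n)) := {e : GenIdx n // G.Adj e.1.1 e.1.2}

/-- The `(d+1) × (d+1)` matrix whose `(j+1, j)`-entry is `mu j` for `0 ≤ j ≤ d-1`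
and whose other entries vanish. -/
def psiMat (k : Type*) [Field k] (d : ℕ) (mu : ℕ → k) :
    Matrix (Fin (d + 1)) (Fin (d + 1)) k :=
  Matrix.of fun p q => if (p : ℕ) = (q : ℕ) + 1 then mu q else 0

/-- The natural algebra map from the free algebra on the edges of `G` to `E_n`,
sending `X_e` to `x_e`; its image is the generalized Fomin–Kirillov algebra `E_G`. -/
def toFK (k : Type*) [Field k] (n : ℕ) (G : SimpleGraph (Fin n)) :
    FreeAlgebra k (EdgeIdx n G) →ₐ[k] FK k n :=
  FreeAlgebra.lift k fun e => fkGen k n e.1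

/-- The algebra map `ψ_λ` from the free algebra on the edges of `G` to matrices,
sending `X_e` to the matrix with `(j+1, j)`-entry `λ_e^j`. -/
def toMatrices (k : Type*) [Field k] (n d : ℕ) (G : SimpleGraph (Fin n))
    (lam : ℕ → EdgeIdx n G → k) :
    FreeAlgebra k (EdgeIdx n G) →ₐ[k] Matrix (Fin (d + 1)) (Fin (d + 1)) k :=
  FreeAlgebra.lift k fun e => psiMat k d fun j => lam j e

/-- A `d`-truncated point module datum over the generalized Fomin–Kirillov algebra
`E_G ⊆ E_n`: scalars `λ_e^j` (`e` an edge of `G`, `0 ≤ j ≤ d-1`) such that each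
vector `(λ_e^j)_e` is nonzero and `ψ_λ` annihilates the kernel of the natural map
from the free algebra on the edges of `G` to `E_n`. -/
def IsTPMDatum (k : Type*) [Field k] (n d : ℕ) (G : SimpleGraph (Fin n))
    (lam : ℕ → EdgeIdx n G → k) : Prop :=
  (∀ j < d, ∃ e, lam j e ≠ 0) ∧
  ∀ a : FreeAlgebra k (EdgeIdx n G), toFK k n G a = 0 → toMatrices k n d G lam a = 0

/-! In `ψ_λ(X_e X_f)` the `(2, 0)`-entry is `λ_e^1 λ_f^0`. If the components of `G` are
cliques, then for any two edges `x_e x_f ∈ x_f E_G + E_G x_e`: by `x_e² = 0`, by commutation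
when `e, f` are disjoint, and by a three-term relation on the triangle they span otherwise.
Evaluating `ψ_λ` on this, `λ_e^1 λ_f^0` lies in `λ_f^1 k + k λ_e^0`. Choosing `e` with
`λ_e^1 ≠ 0` and `f` with `λ_f^0 ≠ 0`, the relation `x² = 0` gives `λ_e^0 = 0 = λ_f^1`, hence
the contradiction `λ_e^1 λ_f^0 = 0`. -/

section FominKirillov

variable {k : Type*} [Field k] {n : ℕ}

theorem fkGen_mul_self (e : GenIdx n) : fkGen k n e * fkGen k n e = 0 := by
  simpa [fkGen] using RingQuot.mkAlgHom_rel k (FKRel.sq (k := k) e)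

theorem fkGen_mul_comm (e f : GenIdx n) (h1 : e.1.1 ≠ f.1.1) (h2 : e.1.1 ≠ f.1.2)
    (h3 : e.1.2 ≠ f.1.1) (h4 : e.1.2 ≠ f.1.2) :
    fkGen k n e * fkGen k n f = fkGen k n f * fkGen k n e := by
  simpa [fkGen, sub_eq_zero] using RingQuot.mkAlgHom_rel k (FKRel.comm (k := k) e f h1 h2 h3 h4)

theorem fkGen_tri1 {i j l : Fin n} (hij : i < j) (hjl : j < l) :
    fkGen k n ⟨(i, j), hij⟩ * fkGen k n ⟨(j, l), hjl⟩ =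
      fkGen k n ⟨(j, l), hjl⟩ * fkGen k n ⟨(i, l), hij.trans hjl⟩ +
        fkGen k n ⟨(i, l), hij.trans hjl⟩ * fkGen k n ⟨(i, j), hij⟩ := by
  simpa [fkGen, sub_sub, sub_eq_zero] using
    RingQuot.mkAlgHom_rel k (FKRel.tri1 (k := k) i j l hij hjl)

theorem fkGen_tri2 {i j l : Fin n} (hij : i < j) (hjl : j < l) :
    fkGen k n ⟨(j, l), hjl⟩ * fkGen k n ⟨(i, j), hij⟩ =
      fkGen k n ⟨(i, j), hij⟩ * fkGen k n ⟨(i, l), hij.trans hjl⟩ +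
        fkGen k n ⟨(i, l), hij.trans hjl⟩ * fkGen k n ⟨(j, l), hjl⟩ := by
  simpa [fkGen, sub_sub, sub_eq_zero, add_comm] using
    RingQuot.mkAlgHom_rel k (FKRel.tri2 (k := k) i j l hij hjl)

end FominKirillov

section GeneralizedFominKirillov

variable {k : Type*} [Field k] {n : ℕ} {G : SimpleGraph (Fin n)}

@[simp]
theorem toFK_ι (e : EdgeIdx n G) : toFK k n G (ι k e) = fkGen k n e.1 :=
  FreeAlgebra.lift_ι_apply _ _

variable (k G) in
/-- `x_e x_f ∈ x_f E_G + E_G x_e`. -/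
def MulReduces (e f : EdgeIdx n G) : Prop :=
  ∃ u v : FreeAlgebra k (EdgeIdx n G),
    toFK k n G (ι k e * ι k f) = toFK k n G (ι k f * u + v * ι k e)

theorem mulReduces_self (e : EdgeIdx n G) : MulReduces k G e e :=
  ⟨0, 0, by simp [fkGen_mul_self]⟩

theorem mulReduces_of_disjoint (e f : EdgeIdx n G) (h1 : e.1.1.1 ≠ f.1.1.1)
    (h2 : e.1.1.1 ≠ f.1.1.2) (h3 : e.1.1.2 ≠ f.1.1.1) (h4 : e.1.1.2 ≠ f.1.1.2) :
    MulReduces k G e f :=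
  ⟨ι k e, 0, by simpa using fkGen_mul_comm e.1 f.1 h1 h2 h3 h4⟩

theorem mulReduces_of_cyclic {p q r : EdgeIdx n G}
    (h : toFK k n G (ι k p * ι k q) = toFK k n G (ι k q * ι k r + ι k r * ι k p)) :
    MulReduces k G p q ∧ MulReduces k G q r ∧ MulReduces k G r p := by
  simp only [map_add, map_mul] at h
  refine ⟨⟨ι k r, ι k r, by simpa using h⟩, ⟨-ι k p, ι k p, ?_⟩, ⟨ι k q, -ι k q, ?_⟩⟩ <;>
  · simp only [map_add, map_mul, map_neg, mul_neg, neg_mul, h]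
    abel

theorem mulReduces_of_triangle {i j l : Fin n} (hij : i < j) (hjl : j < l)
    (hA : G.Adj i j) (hB : G.Adj j l) (hC : G.Adj i l) :
    ∀ e ∈ ({⟨⟨(i, j), hij⟩, hA⟩, ⟨⟨(j, l), hjl⟩, hB⟩, ⟨⟨(i, l), hij.trans hjl⟩, hC⟩} :
        Set (EdgeIdx n G)),
      ∀ f ∈ ({⟨⟨(i, j), hij⟩, hA⟩, ⟨⟨(j, l), hjl⟩, hB⟩, ⟨⟨(i, l), hij.trans hjl⟩, hC⟩} :
        Set (EdgeIdx n G)), MulReduces k G e f := by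
  obtain ⟨hab, hbc, hca⟩ := mulReduces_of_cyclic (k := k) (p := ⟨⟨(i, j), hij⟩, hA⟩)
    (q := ⟨⟨(j, l), hjl⟩, hB⟩) (r := ⟨⟨(i, l), hij.trans hjl⟩, hC⟩)
    (by simpa using fkGen_tri1 (k := k) hij hjl)
  obtain ⟨hba, hac, hcb⟩ := mulReduces_of_cyclic (k := k) (p := ⟨⟨(j, l), hjl⟩, hB⟩)
    (q := ⟨⟨(i, j), hij⟩, hA⟩) (r := ⟨⟨(i, l), hij.trans hjl⟩, hC⟩)
    (by simpa using fkGen_tri2 (k := k) hij hjl)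
  simp only [Set.mem_insert_iff, Set.mem_singleton_iff]
  rintro e (rfl | rfl | rfl) f (rfl | rfl | rfl) <;> first | assumption | exact mulReduces_self _

theorem mulReduces_of_reachable_adj (hG : ∀ a b : Fin n, G.Reachable a b → a ≠ b → G.Adj a b)
    (e f : EdgeIdx n G) : MulReduces k G e f := by
  have adj {x y z} (hxy : G.Adj x y) (hyz : G.Adj y z) (hxz : x ≠ z) : G.Adj x z :=
    hG _ _ (hxy.reachable.trans hyz.reachable) hxz
  obtain ⟨⟨⟨a, b⟩, hab : a < b⟩, he : G.Adj a b⟩ := e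
  obtain ⟨⟨⟨c, d⟩, hcd : c < d⟩, hf : G.Adj c d⟩ := f
  rcases eq_or_ne a c with rfl | hac
  · rcases lt_trichotomy b d with hbd | rfl | hdb
    · exact mulReduces_of_triangle hab hbd he (adj he.symm hf hbd.ne) hf _ (by simp) _ (by simp)
    · exact mulReduces_self _
    · exact mulReduces_of_triangle hcd hdb hf (adj hf.symm he hdb.ne) he _ (by simp) _ (by simp)
  rcases eq_or_ne b d with rfl | hbd
  · rcases hac.lt_or_gt with hac | hca
    · exact mulReduces_of_triangle hac hcd (adj he hf.symm hac.ne) hf he _ (by simp) _ (by simp)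
    · exact mulReduces_of_triangle hca hab (adj hf he.symm hca.ne) he hf _ (by simp) _ (by simp)
  rcases eq_or_ne a d with rfl | had
  · exact mulReduces_of_triangle hcd hab hf he (adj hf he (hcd.trans hab).ne) _ (by simp) _
      (by simp)
  rcases eq_or_ne b c with rfl | hbc
  · exact mulReduces_of_triangle hab hcd he hf (adj he hf (hab.trans hcd).ne) _ (by simp) _
      (by simp)
  exact mulReduces_of_disjoint _ _ hac had hbc hbd

end GeneralizedFominKirillov

section PointModules

variable {k : Type*} [Field k] {n d : ℕ} {G : SimpleGraph (Fin n)}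

theorem psiMat_mul_apply (mu : ℕ → k) (A : Matrix (Fin (d + 1)) (Fin (d + 1)) k) {r : ℕ}
    (hr : r + 1 < d + 1) (q : Fin (d + 1)) :
    (psiMat k d mu * A) ⟨r + 1, hr⟩ q = mu r * A ⟨r, by omega⟩ q := by
  rw [Matrix.mul_apply, Finset.sum_eq_single ⟨r, by omega⟩]
  · simp [psiMat]
  · intro s _ hs
    simp [psiMat, Fin.ext_iff] at hs ⊢
    omega
  · simp

theorem mul_psiMat_apply (A : Matrix (Fin (d + 1)) (Fin (d + 1)) k) (mu : ℕ → k)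
    (p : Fin (d + 1)) {r : ℕ} (hr : r + 1 < d + 1) :
    (A * psiMat k d mu) p ⟨r, by omega⟩ = A p ⟨r + 1, hr⟩ * mu r := by
  rw [Matrix.mul_apply, Finset.sum_eq_single ⟨r + 1, hr⟩]
  · simp [psiMat]
  · intro s _ hs
    simp [psiMat, Fin.ext_iff] at hs ⊢
    omega
  · simp

theorem psiMat_mul_psiMat_apply (mu nu : ℕ → k) {r : ℕ} (hr : r + 2 < d + 1) :
    (psiMat k d mu * psiMat k d nu) ⟨r + 2, hr⟩ ⟨r, by omega⟩ = mu (r + 1) * nu r := by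
  rw [psiMat_mul_apply mu _ (r := r + 1) hr]
  simp [psiMat]

@[simp]
theorem toMatrices_ι (lam : ℕ → EdgeIdx n G → k) (e : EdgeIdx n G) :
    toMatrices k n d G lam (ι k e) = psiMat k d fun j => lam j e :=
  FreeAlgebra.lift_ι_apply _ _

variable {lam : ℕ → EdgeIdx n G → k}

theorem toMatrices_eq_of_toFK_eq (hker : ∀ a, toFK k n G a = 0 → toMatrices k n d G lam a = 0)
    {a b : FreeAlgebra k (EdgeIdx n G)} (h : toFK k n G a = toFK k n G b) :
    toMatrices k n d G lam a = toMatrices k n d G lam b := by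
  rw [← sub_eq_zero, ← map_sub]
  exact hker _ (by rw [map_sub, h, sub_self])

theorem lam_succ_mul_lam_self (hker : ∀ a, toFK k n G a = 0 → toMatrices k n d G lam a = 0)
    (e : EdgeIdx n G) {j : ℕ} (hj : j + 2 < d + 1) : lam (j + 1) e * lam j e = 0 := by
  have h := congrFun₂ (hker (ι k e * ι k e) (by simp [fkGen_mul_self])) ⟨j + 2, hj⟩ ⟨j, by omega⟩
  rwa [map_mul, toMatrices_ι, psiMat_mul_psiMat_apply] at h

theorem exists_lam_succ_mul_lam_eq (hker : ∀ a, toFK k n G a = 0 → toMatrices k n d G lam a = 0)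
    {e f : EdgeIdx n G} (hef : MulReduces k G e f) {j : ℕ} (hj : j + 2 < d + 1) :
    ∃ c c' : k, lam (j + 1) e * lam j f = lam (j + 1) f * c + c' * lam j e := by
  obtain ⟨u, v, h⟩ := hef
  have h := congrFun₂ (toMatrices_eq_of_toFK_eq hker h) ⟨j + 2, hj⟩ ⟨j, by omega⟩
  simp only [map_add, map_mul, toMatrices_ι, Matrix.add_apply, psiMat_mul_psiMat_apply] at h
  rw [psiMat_mul_apply _ _ (r := j + 1) hj, mul_psiMat_apply _ _ _ (by omega)] at h
  exact ⟨_, _, h⟩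

theorem lam_succ_mul_lam_eq_zero (hker : ∀ a, toFK k n G a = 0 → toMatrices k n d G lam a = 0)
    (hG : ∀ a b : Fin n, G.Reachable a b → a ≠ b → G.Adj a b) {j : ℕ} (hj : j + 2 < d + 1)
    (e f : EdgeIdx n G) : lam (j + 1) e * lam j f = 0 := by
  by_contra hne
  obtain ⟨he, hf⟩ := mul_ne_zero_iff.mp hne
  have he' : lam j e = 0 := (mul_eq_zero.mp (lam_succ_mul_lam_self hker e hj)).resolve_left he
  have hf' : lam (j + 1) f = 0 :=
    (mul_eq_zero.mp (lam_succ_mul_lam_self hker f hj)).resolve_right hf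
  obtain ⟨c, c', h⟩ := exists_lam_succ_mul_lam_eq hker (mulReduces_of_reachable_adj hG e f) hj
  exact hne (by simpa [he', hf'] using h)

theorem not_isTPMDatum (hd : 2 ≤ d) (hG : ∀ a b : Fin n, G.Reachable a b → a ≠ b → G.Adj a b) :
    ¬ IsTPMDatum k n d G lam := by
  rintro ⟨hnz, hker⟩
  obtain ⟨e, he⟩ := hnz 1 (by omega)
  obtain ⟨f, hf⟩ := hnz 0 (by omega)
  exact mul_ne_zero he hf (lam_succ_mul_lam_eq_zero hker hG (j := 0) (by omega) e f)

end PointModules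

theorem no_two_truncated_point_module_of_disjoint_union_of_complete_general
    (k : Type*) [Field k] (n : ℕ)
    (G : SimpleGraph (Fin n))
    (hcomplete : ∀ a b : Fin n, G.Reachable a b → a ≠ b → G.Adj a b) :
    ¬ ∃ lam : ℕ → EdgeIdx n G → k, IsTPMDatum k n 2 G lam := by
  rintro ⟨lam, hlam⟩
  exact not_isTPMDatum le_rfl hcomplete hlam

/-- If `G` (a graph on `{1,…,n}`, `n ≥ 3`, with at least one edge) is a disjoint union
of complete graphs (every two distinct vertices in the same connected component are
adjacent), then `E_G` admits no 2-truncated point module. -/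
theorem no_two_truncated_point_module_of_disjoint_union_of_complete
    (k : Type*) [Field k] [IsAlgClosed k] (n : ℕ) (hn : 3 ≤ n)
    (G : SimpleGraph (Fin n)) (hedge : ∃ a b, G.Adj a b)
    (hcomplete : ∀ a b : Fin n, G.Reachable a b → a ≠ b → G.Adj a b) :
    ¬ ∃ lam : ℕ → EdgeIdx n G → k, IsTPMDatum k n 2 G lam :=
  no_two_truncated_point_module_of_disjoint_union_of_complete_general k n G hcomplete
end
end

section
/- Let G be a finite simple graph on vertex set {1, …, n} with n ≥ 3. If G is not a disjoint union of complete graphs, then for d = 2 there exists a d-truncated point module datum over the generalized Fomin–Kirillov algebra E_G; equivalently, E_G admits a 2-truncated point module. -/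
noncomputable section

open FreeAlgebra

section Dev
variable {k : Type*} [Field k] {n : ℕ}

/-- Coefficient function for the auxiliary representation. -/
def betaFn (P Q R : GenIdx n) (s : k) (g h : GenIdx n) : k :=
  (if R = g ∧ P = h then 1 else 0) + (if Q = g ∧ R = h then s else 0)

/-- The operator `T_g` on `W = k × (GenIdx n → k) × k`. -/
def Tend (P Q R : GenIdx n) (s : k) (g : GenIdx n) :
    Module.End k (k × (GenIdx n → k) × k) where
  toFun x := (0, Pi.single g x.1,
    (if R = g then x.2.1 P else 0) + (if Q = g then s * x.2.1 R else 0))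
  map_add' x y := by
    simp only [Prod.fst_add, Prod.snd_add, Pi.add_apply, Pi.single_add, Prod.mk_add_mk,
      Prod.mk.injEq]
    refine ⟨by ring, by simp, by split_ifs <;> ring⟩
  map_smul' c x := by
    simp only [Prod.smul_fst, Prod.smul_snd, Pi.smul_apply, Prod.smul_mk, RingHom.id_apply,
      smul_eq_mul, Prod.mk.injEq]
    refine ⟨by ring, by rw [← smul_eq_mul, Pi.single_smul], by split_ifs <;> ring⟩

lemma Tend_mul_apply (P Q R : GenIdx n) (s : k) (g h : GenIdx n)
    (x : k × (GenIdx n → k) × k) :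
    (Tend P Q R s g * Tend P Q R s h) x = (0, 0, betaFn P Q R s g h * x.1) := by
  rw [Module.End.mul_apply]
  simp only [Tend, LinearMap.coe_mk, AddHom.coe_mk, betaFn, Pi.single_apply, ite_and]
  refine Prod.ext rfl (Prod.ext (by simp) ?_)
  split_ifs <;> (first | ring | tauto)

/-- The scalars of the point module datum. -/
def lamFun (G : SimpleGraph (Fin n)) (P R : GenIdx n) : ℕ → EdgeIdx n G → k :=
  fun jj e =>
    if jj = 0 then (if P = e.1 then 1 else 0)
    else if jj = 1 then (if R = e.1 then 1 else 0) else 0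

/-- The intertwining projection onto the truncated point module. -/
def piMap (P : GenIdx n) : (k × (GenIdx n → k) × k) →ₗ[k] (Fin (2+1) → k) where
  toFun x t := if t = 0 then x.1 else if t = 1 then x.2.1 P else x.2.2
  map_add' x y := by
    funext t
    by_cases h0 : t = 0 <;> by_cases h1 : t = 1 <;> simp [h0, h1]
  map_smul' c x := by
    funext t
    by_cases h0 : t = 0 <;> by_cases h1 : t = 1 <;> simp [h0, h1]

lemma piMap_intertwine (G : SimpleGraph (Fin n)) (P Q R : GenIdx n) (s : k)
    (e : EdgeIdx n G) (heQ : Q ≠ e.1) :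
    (Matrix.mulVecLin (psiMat k 2 fun jj => lamFun G P R jj e)).comp (piMap P)
      = (piMap P).comp (Tend P Q R s e.1) := by
  apply LinearMap.ext; intro x
  funext t
  rw [LinearMap.comp_apply, LinearMap.comp_apply, Matrix.mulVecLin_apply]
  fin_cases t
  · simp [Matrix.mulVec, dotProduct, Fin.sum_univ_three, psiMat, piMap, Tend, lamFun]
  · simp [Matrix.mulVec, dotProduct, Fin.sum_univ_three, psiMat, piMap, Tend, lamFun,
      Pi.single_apply]
  · simp [Matrix.mulVec, dotProduct, Fin.sum_univ_three, psiMat, piMap, Tend, lamFun,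
      Pi.single_apply, if_neg heQ]
end Dev

section Main
variable {k : Type*} [Field k] {n : ℕ}

/-- Abstract construction of a 2-truncated point module datum from suitable
configuration data `P Q R s`. -/
theorem aux_datum (G : SimpleGraph (Fin n)) (P Q R : GenIdx n) (s : k)
    (hPadj : G.Adj P.1.1 P.1.2) (hRadj : G.Adj R.1.1 R.1.2)
    (hQnadj : ¬ G.Adj Q.1.1 Q.1.2)
    (hRP : R ≠ P) (hQR : Q ≠ R)
    (hshareRP : R.1.1 = P.1.1 ∨ R.1.1 = P.1.2 ∨ R.1.2 = P.1.1 ∨ R.1.2 = P.1.2)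
    (hshareQR : Q.1.1 = R.1.1 ∨ Q.1.1 = R.1.2 ∨ Q.1.2 = R.1.1 ∨ Q.1.2 = R.1.2)
    (htri1 : ∀ (i j l : Fin n) (hij : i < j) (hjl : j < l),
      betaFn P Q R s ⟨(i,j),hij⟩ ⟨(j,l),hjl⟩
        - betaFn P Q R s ⟨(j,l),hjl⟩ ⟨(i,l),hij.trans hjl⟩
        - betaFn P Q R s ⟨(i,l),hij.trans hjl⟩ ⟨(i,j),hij⟩ = 0)
    (htri2 : ∀ (i j l : Fin n) (hij : i < j) (hjl : j < l),
      betaFn P Q R s ⟨(j,l),hjl⟩ ⟨(i,j),hij⟩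
        - betaFn P Q R s ⟨(i,l),hij.trans hjl⟩ ⟨(j,l),hjl⟩
        - betaFn P Q R s ⟨(i,j),hij⟩ ⟨(i,l),hij.trans hjl⟩ = 0) :
    ∃ lam : ℕ → EdgeIdx n G → k, IsTPMDatum k n 2 G lam := by
  classical
  set θ : FreeAlgebra k (GenIdx n) →ₐ[k] Module.End k (k × (GenIdx n → k) × k) :=
    FreeAlgebra.lift k (Tend P Q R s) with hθ
  have hθι : ∀ g, θ (ι k g) = Tend P Q R s g := fun g => FreeAlgebra.lift_ι_apply _ _
  have hrel : ∀ ⦃a b⦄, FKRel k n a b → θ a = θ b := by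
    intro a b r
    induction r with
    | sq e =>
        have hb : betaFn (k := k) P Q R s e e = 0 := by
          unfold betaFn
          rw [if_neg, if_neg, add_zero]
          · rintro ⟨h1, h2⟩; exact hQR (h1.trans h2.symm)
          · rintro ⟨h1, h2⟩; exact hRP (h1.trans h2.symm)
        simp only [map_mul, map_zero, hθι]
        apply LinearMap.ext; intro x
        rw [Tend_mul_apply, hb]
        simp
    | comm e f h1 h2 h3 h4 =>
        have hef : betaFn (k := k) P Q R s e f = 0 := by
          unfold betaFn
          rw [if_neg, if_neg, add_zero]
          · rintro ⟨hE, hF⟩; subst hE; subst hF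
            rcases hshareQR with h | h | h | h
            exacts [h1 h, h2 h, h3 h, h4 h]
          · rintro ⟨hE, hF⟩; subst hE; subst hF
            rcases hshareRP with h | h | h | h
            exacts [h1 h, h2 h, h3 h, h4 h]
        have hfe : betaFn (k := k) P Q R s f e = 0 := by
          unfold betaFn
          rw [if_neg, if_neg, add_zero]
          · rintro ⟨hE, hF⟩; subst hE; subst hF
            rcases hshareQR with h | h | h | h
            exacts [h1 h.symm, h3 h.symm, h2 h.symm, h4 h.symm]
          · rintro ⟨hE, hF⟩; subst hE; subst hF
            rcases hshareRP with h | h | h | h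
            exacts [h1 h.symm, h3 h.symm, h2 h.symm, h4 h.symm]
        simp only [map_sub, map_mul, map_zero, hθι]
        apply LinearMap.ext; intro x
        simp only [LinearMap.sub_apply, Tend_mul_apply, hef, hfe, LinearMap.zero_apply]
        simp
    | tri1 i j l hij hjl =>
        simp only [map_sub, map_mul, map_zero, hθι]
        apply LinearMap.ext; intro x
        simp only [LinearMap.sub_apply, Tend_mul_apply, LinearMap.zero_apply,
          Prod.mk_sub_mk]
        rw [← sub_mul, ← sub_mul, htri1 i j l hij hjl, zero_mul]
        simp
    | tri2 i j l hij hjl =>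
        simp only [map_sub, map_mul, map_zero, hθι]
        apply LinearMap.ext; intro x
        simp only [LinearMap.sub_apply, Tend_mul_apply, LinearMap.zero_apply,
          Prod.mk_sub_mk]
        rw [← sub_mul, ← sub_mul, htri2 i j l hij hjl, zero_mul]
        simp
  set Θ : FK k n →ₐ[k] Module.End k (k × (GenIdx n → k) × k) :=
    RingQuot.liftAlgHom k ⟨θ, hrel⟩ with hΘ
  have hΘgen : ∀ g, Θ (fkGen k n g) = Tend P Q R s g := by
    intro g
    rw [hΘ, fkGen, RingQuot.liftAlgHom_mkAlgHom_apply, hθι]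
  have key : ∀ a : FreeAlgebra k (EdgeIdx n G),
      (Matrix.mulVecLin (toMatrices k n 2 G (lamFun G P R) a)).comp (piMap P)
        = (piMap P).comp (Θ ((toFK k n G) a)) := by
    intro a
    induction a using FreeAlgebra.induction with
    | grade0 r =>
        simp only [AlgHom.commutes]
        apply LinearMap.ext; intro x
        simp [Algebra.algebraMap_eq_smul_one, Matrix.smul_mulVec, Matrix.one_mulVec,
          Module.algebraMap_end_apply, map_smul]
    | grade1 e =>
        have h1 : (toFK k n G) (FreeAlgebra.ι k e) = fkGen k n e.1 := by
          rw [toFK, FreeAlgebra.lift_ι_apply]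
        have h2 : (toMatrices k n 2 G (lamFun G P R)) (FreeAlgebra.ι k e)
            = psiMat k 2 fun jj => lamFun G P R jj e := by
          rw [toMatrices, FreeAlgebra.lift_ι_apply]
        have heQ : Q ≠ e.1 := fun h => hQnadj (h ▸ e.2)
        rw [h1, h2, hΘgen, piMap_intertwine G P Q R s e heQ]
    | mul a b ha hb =>
        rw [map_mul, map_mul, map_mul, Matrix.mulVecLin_mul, Module.End.mul_eq_comp,
          LinearMap.comp_assoc, hb, ← LinearMap.comp_assoc, ha, LinearMap.comp_assoc]
    | add a b ha hb =>
        apply LinearMap.ext; intro x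
        have ha' := LinearMap.congr_fun ha x
        have hb' := LinearMap.congr_fun hb x
        simp only [map_add, LinearMap.comp_apply, Matrix.mulVecLin_apply,
          Matrix.add_mulVec, LinearMap.add_apply] at *
        rw [ha', hb']
  refine ⟨lamFun G P R, ?_, ?_⟩
  · intro jj hjj
    interval_cases jj
    · exact ⟨⟨P, hPadj⟩, by simp [lamFun]⟩
    · exact ⟨⟨R, hRadj⟩, by simp [lamFun]⟩
  · intro a ha
    have h0 := key a
    rw [ha, map_zero] at h0
    have hv : ∀ v, (toMatrices k n 2 G (lamFun G P R) a).mulVec (piMap P v) = 0 := by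
      intro v
      have := LinearMap.congr_fun h0 v
      simpa [Matrix.mulVecLin_apply] using this
    apply Matrix.ext
    intro t q
    fin_cases q
    · have h := congrFun (hv (1, 0, 0)) t
      simpa [piMap, Matrix.mulVec, dotProduct, Fin.sum_univ_three] using h
    · have h := congrFun (hv (0, Pi.single P 1, 0)) t
      simpa [piMap, Matrix.mulVec, dotProduct, Fin.sum_univ_three,
        Pi.single_apply] using h
    · have h := congrFun (hv (0, 0, 1)) t
      simpa [piMap, Matrix.mulVec, dotProduct, Fin.sum_univ_three] using h

end Main

lemma exists_induced_path {V : Type*} (G : SimpleGraph V) {a b : V} (w : G.Walk a b) :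
    a ≠ b → ¬ G.Adj a b → ∃ x y z, G.Adj x y ∧ G.Adj y z ∧ ¬ G.Adj x z ∧ x ≠ z := by
  induction w with
  | nil => intro h _; exact absurd rfl h
  | @cons a c b h q ih =>
      intro hne hna
      by_cases hcb : c = b
      · subst hcb; exact absurd h hna
      · by_cases hadj : G.Adj c b
        · exact ⟨a, c, b, h, hadj, hna, hne⟩
        · exact ih hcb hadj


set_option maxHeartbeats 1000000 in
/-- If `G` (a graph on `{1,…,n}`, `n ≥ 3`) is not a disjoint union of complete graphs
(i.e. some connected component is not complete), then `E_G` admits a 2-truncated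
point module. -/
theorem exists_two_truncated_point_module_of_not_disjoint_union_of_complete
    (k : Type*) [Field k] [IsAlgClosed k] (n : ℕ) (hn : 3 ≤ n)
    (G : SimpleGraph (Fin n))
    (hnotcomplete : ¬ ∀ a b : Fin n, G.Reachable a b → a ≠ b → G.Adj a b) :
    ∃ lam : ℕ → EdgeIdx n G → k, IsTPMDatum k n 2 G lam := by
  push_neg at hnotcomplete
  obtain ⟨a, b, hreach, hab, hnadj⟩ := hnotcomplete
  obtain ⟨wlk⟩ := hreach
  obtain ⟨u, v, w, huv, hvw, hnuw, huw⟩ := exists_induced_path G wlk hab hnadj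
  clear hab hnadj
  have main : ∀ (u v w : Fin n), G.Adj u v → G.Adj v w → ¬ G.Adj u w → u < w →
      ∃ lam : ℕ → EdgeIdx n G → k, IsTPMDatum k n 2 G lam := by
    clear huv hvw hnuw huw u v w
    intro u v w huv hvw hnuw huw
    rcases lt_trichotomy v u with hvu' | rfl | huv'
    · -- v < u < w
      refine aux_datum G ⟨(v,u), hvu'⟩ ⟨(u,w), huw⟩ ⟨(v,w), hvu'.trans huw⟩ (-1 : k)
        huv.symm hvw hnuw ?_ ?_ (Or.inl rfl) (Or.inr (Or.inr (Or.inr rfl))) ?_ ?_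
      · intro hcon; exact huw.ne' (congrArg (fun z => z.1.2) hcon)
      · intro hcon; exact huv.ne (congrArg (fun z => z.1.1) hcon)
      · intro i j l hij hjl
        have Hij : (i:ℕ) < j := hij
        have Hjl : (j:ℕ) < l := hjl
        have Hvu : (v:ℕ) < u := hvu'
        have Huw : (u:ℕ) < w := huw
        simp only [betaFn, Subtype.mk.injEq, Prod.mk.injEq, Fin.ext_iff]
        split_ifs <;> (try norm_num) <;> omega
      · intro i j l hij hjl
        have Hij : (i:ℕ) < j := hij
        have Hjl : (j:ℕ) < l := hjl
        have Hvu : (v:ℕ) < u := hvu'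
        have Huw : (u:ℕ) < w := huw
        simp only [betaFn, Subtype.mk.injEq, Prod.mk.injEq, Fin.ext_iff]
        split_ifs <;> (try norm_num) <;> omega
    · exact absurd rfl huv.ne'
    · rcases lt_trichotomy v w with hvw' | rfl | hwv'
      · -- u < v < w
        refine aux_datum G ⟨(u,v), huv'⟩ ⟨(u,w), huw⟩ ⟨(v,w), hvw'⟩ (1 : k)
          huv hvw hnuw ?_ ?_ (Or.inr (Or.inl rfl)) (Or.inr (Or.inr (Or.inr rfl))) ?_ ?_
        · intro hcon; exact huv'.ne' (congrArg (fun z => z.1.1) hcon)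
        · intro hcon; exact huv'.ne (congrArg (fun z => z.1.1) hcon)
        · intro i j l hij hjl
          have Hij : (i:ℕ) < j := hij
          have Hjl : (j:ℕ) < l := hjl
          have Huv : (u:ℕ) < v := huv'
          have Hvw : (v:ℕ) < w := hvw'
          simp only [betaFn, Subtype.mk.injEq, Prod.mk.injEq, Fin.ext_iff]
          split_ifs <;> (try norm_num) <;> omega
        · intro i j l hij hjl
          have Hij : (i:ℕ) < j := hij
          have Hjl : (j:ℕ) < l := hjl
          have Huv : (u:ℕ) < v := huv'
          have Hvw : (v:ℕ) < w := hvw'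
          simp only [betaFn, Subtype.mk.injEq, Prod.mk.injEq, Fin.ext_iff]
          split_ifs <;> (try norm_num) <;> omega
      · exact absurd rfl hvw.ne
      · -- u < w < v
        refine aux_datum G ⟨(u,v), huv'⟩ ⟨(u,w), huw⟩ ⟨(w,v), hwv'⟩ (1 : k)
          huv hvw.symm hnuw ?_ ?_ (Or.inr (Or.inr (Or.inr rfl))) (Or.inr (Or.inr (Or.inl rfl)))
          ?_ ?_
        · intro hcon; exact huw.ne' (congrArg (fun z => z.1.1) hcon)
        · intro hcon; exact huw.ne (congrArg (fun z => z.1.1) hcon)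
        · intro i j l hij hjl
          have Hij : (i:ℕ) < j := hij
          have Hjl : (j:ℕ) < l := hjl
          have Huw : (u:ℕ) < w := huw
          have Hwv : (w:ℕ) < v := hwv'
          simp only [betaFn, Subtype.mk.injEq, Prod.mk.injEq, Fin.ext_iff]
          split_ifs <;> (try norm_num) <;> omega
        · intro i j l hij hjl
          have Hij : (i:ℕ) < j := hij
          have Hjl : (j:ℕ) < l := hjl
          have Huw : (u:ℕ) < w := huw
          have Hwv : (w:ℕ) < v := hwv'
          simp only [betaFn, Subtype.mk.injEq, Prod.mk.injEq, Fin.ext_iff]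
          split_ifs <;> (try norm_num) <;> omega
  rcases lt_or_gt_of_ne huw with h | h
  · exact main u v w huv hvw hnuw h
  · exact main w v u hvw.symm huv.symm (fun hh => hnuw hh.symm) h
end
end

section
/- Let n ≥ 3 and d ≥ 3. A tuple (λ^0, …, λ^{d−1}) of nonzero vectors in k^{n−1} satisfies equations (A), (B), (C) if and only if there exist nonzero scalars c_0, …, c_{d−1} ∈ k and an index i such that either 1 ≤ i ≤ n−d and λ^r = c_r·e_{i+r} for all 0 ≤ r ≤ d−1, or d ≤ i ≤ n−1 and λ^r = c_r·e_{i−r} for all 0 ≤ r ≤ d−1, where e_j denotes the j-th standard basis vector of k^{n−1}. In particular, for d ≥ n no such tuple exists. -/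
/-- Equations (A), (B), (C): the multilinearized relations of the nil-Coxeter algebra
`B_n ≅ E_{A_n}`, for a tuple `λ^0, …, λ^{d-1}` of vectors in `k^{n-1}` (a vector is
recorded as a function `ℕ → k`, with only the entries `1 ≤ i ≤ n - 1` relevant). -/
def NilCoxeterSystem (k : Type*) [Field k] (n d : ℕ) (lam : ℕ → ℕ → k) : Prop :=
  (∀ i r, 1 ≤ i → i ≤ n - 1 → r + 2 ≤ d → lam (r + 1) i * lam r i = 0) ∧
  (∀ i j r, 1 ≤ i → i ≤ n - 1 → 1 ≤ j → j ≤ n - 1 → (i + 1 < j ∨ j + 1 < i) →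
    r + 2 ≤ d → lam (r + 1) i * lam r j - lam (r + 1) j * lam r i = 0) ∧
  (∀ c s, 1 ≤ c → c ≤ n - 2 → s + 3 ≤ d →
    lam (s + 2) c * lam (s + 1) (c + 1) * lam s c -
      lam (s + 2) (c + 1) * lam (s + 1) c * lam s (c + 1) = 0)

section Aux
variable {k : Type*} [Field k] {n d : ℕ} {lam : ℕ → ℕ → k}

lemma nc_zero (hS : NilCoxeterSystem k n d lam) {r i : ℕ} (hi1 : 1 ≤ i) (hi2 : i ≤ n - 1)
    (hr : r + 2 ≤ d) (h : lam r i ≠ 0) : lam (r + 1) i = 0 := by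
  by_contra h0
  exact (mul_ne_zero h0 h) (hS.1 i r hi1 hi2 hr)

lemma nc_adj (hS : NilCoxeterSystem k n d lam) {r i j : ℕ}
    (hi1 : 1 ≤ i) (hi2 : i ≤ n - 1) (hj1 : 1 ≤ j) (hj2 : j ≤ n - 1)
    (hr : r + 2 ≤ d) (hi : lam (r + 1) i ≠ 0) (hj : lam r j ≠ 0) :
    i = j + 1 ∨ j = i + 1 := by
  by_contra hcon
  push_neg at hcon
  by_cases hij : i = j
  · subst hij
    exact (mul_ne_zero hi hj) (hS.1 i r hi1 hi2 hr)
  · have hfar : i + 1 < j ∨ j + 1 < i := by omega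
    have hb := hS.2.1 i j r hi1 hi2 hj1 hj2 hfar hr
    have h1 : lam (r + 1) i * lam r j ≠ 0 := mul_ne_zero hi hj
    have h2 : lam (r + 1) j * lam r i ≠ 0 := by
      intro h0; rw [h0, sub_zero] at hb; exact h1 hb
    have h3 : lam r i ≠ 0 := right_ne_zero_of_mul h2
    exact (mul_ne_zero hi h3) (hS.1 i r hi1 hi2 hr)


lemma nc_uniq (hS : NilCoxeterSystem k n d lam) (hd : 3 ≤ d)
    (h1 : ∀ r < d, ∃ i, 1 ≤ i ∧ i ≤ n - 1 ∧ lam r i ≠ 0)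
    {r p q : ℕ} (hr : r < d) (hp1 : 1 ≤ p) (hp2 : p ≤ n - 1) (hq1 : 1 ≤ q) (hq2 : q ≤ n - 1)
    (hp : lam r p ≠ 0) (hq : lam r q ≠ 0) : p = q := by
  -- reduce to the case p < q
  have main : ∀ p q : ℕ, 1 ≤ p → p ≤ n - 1 → 1 ≤ q → q ≤ n - 1 →
      lam r p ≠ 0 → lam r q ≠ 0 → p < q → False := by
    clear hp1 hp2 hq1 hq2 hp hq p q
    intro p q hp1 hp2 hq1 hq2 hp hq hpq
    by_cases hcase1 : r + 3 ≤ d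
    · -- use levels r, r+1, r+2
      obtain ⟨b, hb1, hb2, hb⟩ := h1 (r + 1) (by omega)
      have hadjp := nc_adj hS hb1 hb2 hp1 hp2 (by omega) hb hp
      have hadjq := nc_adj hS hb1 hb2 hq1 hq2 (by omega) hb hq
      have hq' : q = p + 2 := by omega
      have hb' : b = p + 1 := by omega
      subst hq' hb'
      obtain ⟨e, he1, he2, he⟩ := h1 (r + 2) (by omega)
      have hadje := nc_adj hS he1 he2 hb1 hb2 (by omega) he hb
      rcases hadje with h | h
      · -- e = p + 2
        have he' : e = p + 2 := by omega
        rw [he'] at he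
        have hc := hS.2.2 (p + 1) r (by omega) (by omega) (by omega)
        have hz : lam (r + 1) (p + 2) = 0 := by
          by_contra h0
          exact (mul_ne_zero h0 hq) (hS.1 (p + 2) r (by omega) (by omega) (by omega))
        rw [hz] at hc
        simp only [mul_zero, zero_mul, zero_sub, neg_eq_zero] at hc
        exact (mul_ne_zero (mul_ne_zero he hb) hq) hc
      · -- e = p
        have he' : e = p := by omega
        rw [he'] at he
        have hc := hS.2.2 p r hp1 (by omega) (by omega)
        have hz : lam (r + 1) p = 0 := by
          by_contra h0
          exact (mul_ne_zero h0 hp) (hS.1 p r hp1 hp2 (by omega))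
        rw [hz] at hc
        simp only [mul_zero, zero_mul, sub_zero] at hc
        exact (mul_ne_zero (mul_ne_zero he hb) hp) hc
    · by_cases hcase2 : 2 ≤ r
      · -- use levels r-2, r-1, r
        obtain ⟨s, rfl⟩ : ∃ s, r = s + 2 := ⟨r - 2, by omega⟩
        obtain ⟨b, hb1, hb2, hb⟩ := h1 (s + 1) (by omega)
        have hadjp := nc_adj hS hp1 hp2 hb1 hb2 (by omega) hp hb
        have hadjq := nc_adj hS hq1 hq2 hb1 hb2 (by omega) hq hb
        have hq' : q = p + 2 := by omega
        have hb' : b = p + 1 := by omega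
        subst hq' hb'
        obtain ⟨g, hg1, hg2, hg⟩ := h1 s (by omega)
        have hadjg := nc_adj hS hb1 hb2 hg1 hg2 (by omega) hb hg
        rcases hadjg with h | h
        · -- g = p
          have hg' : g = p := by omega
          rw [hg'] at hg
          have hc := hS.2.2 p s hp1 (by omega) (by omega)
          have hz : lam (s + 1) p = 0 := by
            by_contra h0
            exact (mul_ne_zero h0 hg) (hS.1 p s hp1 hp2 (by omega))
          rw [hz] at hc
          simp only [mul_zero, zero_mul, sub_zero] at hc
          exact (mul_ne_zero (mul_ne_zero hp hb) hg) hc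
        · -- g = p + 2
          have hg' : g = p + 2 := by omega
          rw [hg'] at hg
          have hc := hS.2.2 (p + 1) s (by omega) (by omega) (by omega)
          have hz : lam (s + 1) (p + 2) = 0 := by
            by_contra h0
            exact (mul_ne_zero h0 hg) (hS.1 (p + 2) s (by omega) (by omega) (by omega))
          rw [hz] at hc
          simp only [mul_zero, zero_mul, zero_sub, neg_eq_zero] at hc
          exact (mul_ne_zero (mul_ne_zero hq hb) hg) hc
      · -- d = 3, r = 1
        have hr1 : r = 1 := by omega
        subst hr1
        obtain ⟨b, hb1, hb2, hb⟩ := h1 0 (by omega)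
        have hadjp := nc_adj hS hp1 hp2 hb1 hb2 (by omega) hp hb
        have hadjq := nc_adj hS hq1 hq2 hb1 hb2 (by omega) hq hb
        have hq' : q = p + 2 := by omega
        have hb' : b = p + 1 := by omega
        subst hq' hb'
        obtain ⟨e, he1, he2, he⟩ := h1 2 (by omega)
        have hadjep := nc_adj hS he1 he2 hp1 hp2 (by omega) he hp
        have hadjeq := nc_adj hS he1 he2 hq1 hq2 (by omega) he hq
        have he' : e = p + 1 := by omega
        rw [he'] at he
        have hc := hS.2.2 (p + 1) 0 (by omega) (by omega) (by omega)
        have hz : lam 1 (p + 1) = 0 := by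
          by_contra h0
          exact (mul_ne_zero h0 hb) (hS.1 (p + 1) 0 (by omega) (by omega) (by omega))
        norm_num at hc
        rw [hz] at hc
        simp only [mul_zero, zero_mul, sub_zero] at hc
        exact (mul_ne_zero (mul_ne_zero he hq) hb) hc
  rcases lt_trichotomy p q with h | h | h
  · exact absurd (main p q hp1 hp2 hq1 hq2 hp hq h) (not_false)
  · exact h
  · exact absurd (main q p hq1 hq2 hp1 hp2 hq hp h) (not_false)

end Aux

/-- For `n ≥ 3`, `d ≥ 3`: a tuple of nonzero vectors satisfies (A), (B), (C) iff it is,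
up to nonzero scalars `c_r`, either `(e_i, e_{i+1}, …, e_{i+d-1})` with `1 ≤ i ≤ n - d`,
or `(e_i, e_{i-1}, …, e_{i-(d-1)})` with `d ≤ i ≤ n - 1`. In particular, for `d ≥ n` no
such tuple exists. -/
theorem nilCoxeter_truncated_point_modules_classification
    (k : Type*) [Field k] [IsAlgClosed k] (n d : ℕ) (hn : 3 ≤ n) (hd : 3 ≤ d)
    (lam : ℕ → ℕ → k) :
    (((∀ r < d, ∃ i, 1 ≤ i ∧ i ≤ n - 1 ∧ lam r i ≠ 0) ∧ NilCoxeterSystem k n d lam) ↔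
      (∃ (c : ℕ → k) (i : ℕ), (∀ r < d, c r ≠ 0) ∧
        ((1 ≤ i ∧ i + d ≤ n ∧
            ∀ r < d, ∀ p, 1 ≤ p → p ≤ n - 1 →
              lam r p = if p = i + r then c r else 0) ∨
          (d ≤ i ∧ i ≤ n - 1 ∧
            ∀ r < d, ∀ p, 1 ≤ p → p ≤ n - 1 →
              lam r p = if p = i - r then c r else 0)))) ∧
    (n ≤ d →
      ¬ ((∀ r < d, ∃ i, 1 ≤ i ∧ i ≤ n - 1 ∧ lam r i ≠ 0) ∧
        NilCoxeterSystem k n d lam)) := by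
  have main : (((∀ r < d, ∃ i, 1 ≤ i ∧ i ≤ n - 1 ∧ lam r i ≠ 0) ∧ NilCoxeterSystem k n d lam) ↔
      (∃ (c : ℕ → k) (i : ℕ), (∀ r < d, c r ≠ 0) ∧
        ((1 ≤ i ∧ i + d ≤ n ∧
            ∀ r < d, ∀ p, 1 ≤ p → p ≤ n - 1 →
              lam r p = if p = i + r then c r else 0) ∨
          (d ≤ i ∧ i ≤ n - 1 ∧
            ∀ r < d, ∀ p, 1 ≤ p → p ≤ n - 1 →
              lam r p = if p = i - r then c r else 0)))) := by
    constructor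
    · rintro ⟨h1, hS⟩
      have key : ∀ r, r < d → ∃ i, (1 ≤ i ∧ i ≤ n - 1 ∧ lam r i ≠ 0 ∧
          ∀ p, 1 ≤ p → p ≤ n - 1 → p ≠ i → lam r p = 0) := by
        intro r hr
        obtain ⟨i, hi1, hi2, hi⟩ := h1 r hr
        refine ⟨i, hi1, hi2, hi, fun p hp1 hp2 hpi => ?_⟩
        by_contra h0
        exact hpi (nc_uniq hS hd h1 hr hp1 hp2 hi1 hi2 h0 hi)
      obtain ⟨a, ha⟩ : ∃ a : ℕ → ℕ, ∀ r, r < d → (1 ≤ a r ∧ a r ≤ n - 1 ∧ lam r (a r) ≠ 0 ∧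
          ∀ p, 1 ≤ p → p ≤ n - 1 → p ≠ a r → lam r p = 0) := by
        choose f hf using key
        refine ⟨fun r => if h : r < d then f r h else 0, fun r hr => ?_⟩
        simp only [dif_pos hr]
        exact hf r hr
      have hadj : ∀ r, r + 2 ≤ d → a (r + 1) = a r + 1 ∨ a r = a (r + 1) + 1 := by
        intro r hr
        obtain ⟨h1r, h2r, h3r, _⟩ := ha r (by omega)
        obtain ⟨h1s, h2s, h3s, _⟩ := ha (r + 1) (by omega)
        exact nc_adj hS h1s h2s h1r h2r hr h3s h3r
      have hturn : ∀ s, s + 3 ≤ d → (a (s + 1) = a s + 1 → a (s + 2) = a (s + 1) + 1) ∧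
          (a s = a (s + 1) + 1 → a (s + 1) = a (s + 2) + 1) := by
        intro s hs
        obtain ⟨h10, h20, h30, h40⟩ := ha s (by omega)
        obtain ⟨h11, h21, h31, h41⟩ := ha (s + 1) (by omega)
        obtain ⟨h12, h22, h32, h42⟩ := ha (s + 2) (by omega)
        have had := hadj (s + 1) (by omega)
        rw [show s + 1 + 1 = s + 2 from rfl] at had
        constructor
        · intro hup
          rcases had with h | h
          · exact h
          · exfalso
            have he : a (s + 2) = a s := by omega
            have hc := hS.2.2 (a s) s h10 (by omega) hs
            have hz : lam (s + 1) (a s) = 0 := h41 (a s) h10 h20 (by omega)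
            rw [hz] at hc
            simp only [mul_zero, zero_mul, sub_zero] at hc
            refine (mul_ne_zero (mul_ne_zero ?_ ?_) h30) hc
            · rw [← he]; exact h32
            · rw [← hup]; exact h31
        · intro hdown
          rcases had with h | h
          · exfalso
            have he : a (s + 2) = a s := by omega
            have hc := hS.2.2 (a (s + 1)) s h11 (by omega) hs
            have hz : lam (s + 2) (a (s + 1)) = 0 := h42 (a (s + 1)) h11 h21 (by omega)
            rw [hz] at hc
            simp only [mul_zero, zero_mul, zero_sub, neg_eq_zero] at hc
            refine (mul_ne_zero (mul_ne_zero ?_ h31) ?_) hc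
            · rw [show a (s + 1) + 1 = a (s + 2) by omega]; exact h32
            · rw [show a (s + 1) + 1 = a s by omega]; exact h30
          · omega
      rcases hadj 0 (by omega) with h0 | h0
      · -- increasing case
        have hstep : ∀ r, r + 2 ≤ d → a (r + 1) = a r + 1 := by
          intro r
          induction r with
          | zero => intro _; exact h0
          | succ m ih => intro hm; exact (hturn m (by omega)).1 (ih (by omega))
        have hval : ∀ r, r < d → a r = a 0 + r := by
          intro r
          induction r with
          | zero => intro _; omega
          | succ m ih =>
            intro hm
            have := hstep m (by omega)
            have := ih (by omega)
            omega
        refine ⟨fun r => lam r (a 0 + r), a 0, ?_, Or.inl ⟨(ha 0 (by omega)).1, ?_, ?_⟩⟩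
        · intro r hr
          have h3 := (ha r hr).2.2.1
          rwa [hval r hr] at h3
        · have h2 := (ha (d - 1) (by omega)).2.1
          have hv := hval (d - 1) (by omega)
          have h1' := (ha 0 (by omega)).1
          omega
        · intro r hr p hp1 hp2
          have h4 := (ha r hr).2.2.2
          have hv := hval r hr
          by_cases hpe : p = a 0 + r
          · rw [if_pos hpe, hpe]
          · rw [if_neg hpe]
            exact h4 p hp1 hp2 (by omega)
      · -- decreasing case
        have hstep : ∀ r, r + 2 ≤ d → a r = a (r + 1) + 1 := by
          intro r
          induction r with
          | zero => intro _; exact h0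
          | succ m ih => intro hm; exact (hturn m (by omega)).2 (ih (by omega))
        have hval : ∀ r, r < d → a r + r = a 0 := by
          intro r
          induction r with
          | zero => intro _; omega
          | succ m ih =>
            intro hm
            have := hstep m (by omega)
            have := ih (by omega)
            omega
        refine ⟨fun r => lam r (a 0 - r), a 0, ?_, Or.inr ⟨?_, (ha 0 (by omega)).2.1, ?_⟩⟩
        · intro r hr
          have h3 := (ha r hr).2.2.1
          have hv := hval r hr
          rwa [show a r = a 0 - r by omega] at h3
        · have h1' := (ha (d - 1) (by omega)).1
          have hv := hval (d - 1) (by omega)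
          omega
        · intro r hr p hp1 hp2
          have h4 := (ha r hr).2.2.2
          have hv := hval r hr
          have h1r := (ha r hr).1
          by_cases hpe : p = a 0 - r
          · rw [if_pos hpe, hpe]
          · rw [if_neg hpe]
            exact h4 p hp1 hp2 (by omega)
    · rintro ⟨c, i, hc, hcase⟩
      rcases hcase with ⟨hi1, hid, hf⟩ | ⟨hdi, hin, hf⟩
      · constructor
        · intro r hr
          refine ⟨i + r, by omega, by omega, ?_⟩
          rw [hf r hr (i + r) (by omega) (by omega), if_pos rfl]
          exact hc r hr
        · refine ⟨fun p r hp1 hp2 hr => ?_, fun p q r hp1 hp2 hq1 hq2 hfar hr => ?_,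
            fun x s hx1 hx2 hs => ?_⟩
          · rw [hf (r + 1) (by omega) p hp1 hp2, hf r (by omega) p hp1 hp2]
            split_ifs with ha1 ha2 <;> first | (exfalso; omega) | ring
          · rw [hf (r + 1) (by omega) p hp1 hp2, hf r (by omega) q hq1 hq2,
              hf (r + 1) (by omega) q hq1 hq2, hf r (by omega) p hp1 hp2]
            split_ifs <;> first | (exfalso; omega) | ring
          · rw [hf (s + 2) (by omega) x hx1 (by omega), hf (s + 1) (by omega) (x + 1) (by omega) (by omega),
              hf s (by omega) x hx1 (by omega), hf (s + 2) (by omega) (x + 1) (by omega) (by omega),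
              hf (s + 1) (by omega) x hx1 (by omega), hf s (by omega) (x + 1) (by omega) (by omega)]
            split_ifs <;> first | (exfalso; omega) | ring
      · constructor
        · intro r hr
          refine ⟨i - r, by omega, by omega, ?_⟩
          rw [hf r hr (i - r) (by omega) (by omega), if_pos rfl]
          exact hc r hr
        · refine ⟨fun p r hp1 hp2 hr => ?_, fun p q r hp1 hp2 hq1 hq2 hfar hr => ?_,
            fun x s hx1 hx2 hs => ?_⟩
          · rw [hf (r + 1) (by omega) p hp1 hp2, hf r (by omega) p hp1 hp2]
            split_ifs <;> first | (exfalso; omega) | ring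
          · rw [hf (r + 1) (by omega) p hp1 hp2, hf r (by omega) q hq1 hq2,
              hf (r + 1) (by omega) q hq1 hq2, hf r (by omega) p hp1 hp2]
            split_ifs <;> first | (exfalso; omega) | ring
          · rw [hf (s + 2) (by omega) x hx1 (by omega), hf (s + 1) (by omega) (x + 1) (by omega) (by omega),
              hf s (by omega) x hx1 (by omega), hf (s + 2) (by omega) (x + 1) (by omega) (by omega),
              hf (s + 1) (by omega) x hx1 (by omega), hf s (by omega) (x + 1) (by omega) (by omega)]
            split_ifs <;> first | (exfalso; omega) | ring
  refine ⟨main, fun hnd hcon => ?_⟩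
  obtain ⟨c, i, hc, hcase⟩ := main.mp hcon
  rcases hcase with ⟨hi1, hid, _⟩ | ⟨hdi, hin, _⟩ <;> omega
end

section
/- Let n ≥ 3. A pair (λ^0, λ^1) of nonzero vectors in k^{n−1} satisfies equations (A) and (B) (the only conditions arising for d = 2) if and only if there exists an index i with 1 ≤ i ≤ n−1 such that either the support of λ^0 equals {i} and the support of λ^1 is contained in {i−1, i+1} ∩ {1, …, n−1}, or the support of λ^1 equals {i} and the support of λ^0 is contained in {i−1, i+1} ∩ {1, …, n−1}. In particular, for n = 3 the solutions up to rescaling each vector are exactly the two pairs (e_1, e_2) and (e_2, e_1). -/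
/-!
Equation (A) says that `λ¹` vanishes on the support of `λ⁰`; given that, equation (B) for a
pair `a ∈ supp λ⁰`, `b ∈ supp λ¹` reduces to `λ¹_b λ⁰_a = 0`, so it forbids `|a - b| > 1`.
Hence (A) and (B) together say exactly that every point of `supp λ⁰` is adjacent to every
point of `supp λ¹`. If one of the supports has two points, every point of the other one is
their common neighbour, so the other support is a singleton.
-/

section

variable {k : Type*}

/-- Equations (A) and (B) for the pair `(λ⁰, λ¹) = (f, g)`, indices running over `1, …, m`. -/
def SatisfiesAB [Ring k] (m : ℕ) (f g : ℕ → k) : Prop :=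
  (∀ i, 1 ≤ i → i ≤ m → g i * f i = 0) ∧
    ∀ i j, 1 ≤ i → i ≤ m → 1 ≤ j → j ≤ m → (i + 1 < j ∨ j + 1 < i) →
      g i * f j - g j * f i = 0

def IsConcentratedPair [Zero k] (m : ℕ) (f g : ℕ → k) (i : ℕ) : Prop :=
  f i ≠ 0 ∧ (∀ p, 1 ≤ p → p ≤ m → p ≠ i → f p = 0) ∧
    ∀ p, 1 ≤ p → p ≤ m → p ≠ i - 1 → p ≠ i + 1 → g p = 0

theorem Set.subsingleton_or_subsingleton_of_forall_adjacent {s t : Set ℕ}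
    (hadj : ∀ a ∈ s, ∀ b ∈ t, a + 1 = b ∨ b + 1 = a) : s.Subsingleton ∨ t.Subsingleton := by
  refine or_iff_not_imp_left.2 fun hs b hb b' hb' => ?_
  obtain ⟨a, ha, a', ha', hne⟩ := Set.not_subsingleton_iff.1 hs
  have := hadj a ha b hb
  have := hadj a' ha' b hb
  have := hadj a ha b' hb'
  have := hadj a' ha' b' hb'
  omega

theorem mul_eq_zero_of_forall_adjacent [MulZeroClass k] {m p q : ℕ} {f g : ℕ → k}
    (hadj : ∀ a ∈ Set.Icc 1 m ∩ f.support, ∀ b ∈ Set.Icc 1 m ∩ g.support, a + 1 = b ∨ b + 1 = a)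
    (hp1 : 1 ≤ p) (hp2 : p ≤ m) (hq1 : 1 ≤ q) (hq2 : q ≤ m) (hpq : p + 1 ≠ q ∧ q + 1 ≠ p) :
    g p * f q = 0 := by
  by_contra hne
  have := hadj q ⟨⟨hq1, hq2⟩, right_ne_zero_of_mul hne⟩ p ⟨⟨hp1, hp2⟩, left_ne_zero_of_mul hne⟩
  omega

theorem satisfiesAB_iff_forall_adjacent [Ring k] [NoZeroDivisors k] {m : ℕ} {f g : ℕ → k} :
    SatisfiesAB m f g ↔
      ∀ a ∈ Set.Icc 1 m ∩ f.support, ∀ b ∈ Set.Icc 1 m ∩ g.support, a + 1 = b ∨ b + 1 = a := by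
  constructor
  · rintro ⟨hA, hB⟩ a ⟨⟨ha1, ha2⟩, hfa⟩ b ⟨⟨hb1, hb2⟩, hgb⟩
    have hga : g a = 0 := (mul_eq_zero.1 (hA a ha1 ha2)).resolve_right hfa
    by_contra hfar
    have hne : a ≠ b := by rintro rfl; exact hgb hga
    have hB' := hB b a hb1 hb2 ha1 ha2 (by omega)
    rw [hga, zero_mul, sub_zero] at hB'
    exact mul_ne_zero hgb hfa hB'
  · intro hadj
    refine ⟨fun i hi1 hi2 => mul_eq_zero_of_forall_adjacent hadj hi1 hi2 hi1 hi2 (by omega),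
      fun i j hi1 hi2 hj1 hj2 hij => ?_⟩
    rw [mul_eq_zero_of_forall_adjacent hadj hi1 hi2 hj1 hj2 (by omega),
      mul_eq_zero_of_forall_adjacent hadj hj1 hj2 hi1 hi2 (by omega), sub_zero]

theorem isConcentratedPair_iff [Zero k] {m i : ℕ} {f g : ℕ → k} (hi : i ∈ Set.Icc 1 m) :
    IsConcentratedPair m f g i ↔
      Set.Icc 1 m ∩ f.support = {i} ∧ ∀ b ∈ Set.Icc 1 m ∩ g.support, i + 1 = b ∨ b + 1 = i := by
  simp only [IsConcentratedPair, Set.eq_singleton_iff_unique_mem, Set.mem_inter_iff,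
    Set.mem_Icc, Function.mem_support, and_imp]
  refine ⟨fun ⟨hfi, hf, hg⟩ => ⟨⟨⟨hi, hfi⟩, fun p hp1 hp2 hfp => ?_⟩, fun b hb1 hb2 hgb => ?_⟩,
    fun ⟨⟨⟨_, hfi⟩, hf⟩, hg⟩ => ⟨hfi, fun p hp1 hp2 hpi => ?_, fun p hp1 hp2 hp hp' => ?_⟩⟩
  · exact not_imp_comm.1 (hf p hp1 hp2) hfp
  · by_contra h
    exact hgb (hg b hb1 hb2 (by omega) (by omega))
  · by_contra hfp
    exact hpi (hf p hp1 hp2 hfp)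
  · by_contra hgp
    have := hg p hp1 hp2 hgp
    omega

theorem satisfiesAB_iff_exists_isConcentratedPair [Ring k] [NoZeroDivisors k] {m : ℕ}
    {f g : ℕ → k} (hf : ∃ i, 1 ≤ i ∧ i ≤ m ∧ f i ≠ 0) (hg : ∃ i, 1 ≤ i ∧ i ≤ m ∧ g i ≠ 0) :
    SatisfiesAB m f g ↔
      ∃ i, 1 ≤ i ∧ i ≤ m ∧ (IsConcentratedPair m f g i ∨ IsConcentratedPair m g f i) := by
  rw [satisfiesAB_iff_forall_adjacent]
  constructor
  · intro hadj
    obtain ⟨a, ha1, ha2, hfa⟩ := hf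
    obtain ⟨b, hb1, hb2, hgb⟩ := hg
    rcases Set.subsingleton_or_subsingleton_of_forall_adjacent hadj with hs | ht
    · have hfa' := hs.eq_singleton_of_mem ⟨⟨ha1, ha2⟩, hfa⟩
      refine ⟨a, ha1, ha2, .inl ((isConcentratedPair_iff ⟨ha1, ha2⟩).2 ⟨hfa', ?_⟩)⟩
      exact hadj a (hfa' ▸ rfl)
    · have hgb' := ht.eq_singleton_of_mem ⟨⟨hb1, hb2⟩, hgb⟩
      refine ⟨b, hb1, hb2, .inr ((isConcentratedPair_iff ⟨hb1, hb2⟩).2 ⟨hgb', ?_⟩)⟩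
      exact fun a ha => (hadj a ha b (hgb' ▸ rfl)).symm
  · rintro ⟨i, hi1, hi2, h | h⟩ a ha b hb
    · obtain ⟨hfi, hg⟩ := (isConcentratedPair_iff ⟨hi1, hi2⟩).1 h
      rw [hfi, Set.mem_singleton_iff] at ha
      exact ha ▸ hg b hb
    · obtain ⟨hgi, hf⟩ := (isConcentratedPair_iff ⟨hi1, hi2⟩).1 h
      rw [hgi, Set.mem_singleton_iff] at hb
      exact hb ▸ (hf a ha).symm

-- For `m = 2` no two indices are far apart, so (B) is vacuous.
theorem satisfiesAB_two_iff [Ring k] {f g : ℕ → k} :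
    SatisfiesAB 2 f g ↔ g 1 * f 1 = 0 ∧ g 2 * f 2 = 0 := by
  refine ⟨fun ⟨hA, _⟩ => ⟨hA 1 le_rfl one_le_two, hA 2 one_le_two le_rfl⟩,
    fun ⟨h1, h2⟩ => ⟨fun i hi1 hi2 => ?_, fun i j _ _ _ _ _ => by omega⟩⟩
  interval_cases i <;> assumption

theorem satisfiesAB_two_iff_of_ne_zero [Ring k] [NoZeroDivisors k] {f g : ℕ → k}
    (hf : ∃ i, 1 ≤ i ∧ i ≤ 2 ∧ f i ≠ 0) (hg : ∃ i, 1 ≤ i ∧ i ≤ 2 ∧ g i ≠ 0) :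
    SatisfiesAB 2 f g ↔
      (f 1 ≠ 0 ∧ f 2 = 0 ∧ g 1 = 0 ∧ g 2 ≠ 0) ∨ (f 1 = 0 ∧ f 2 ≠ 0 ∧ g 1 ≠ 0 ∧ g 2 = 0) := by
  have hf' : f 1 ≠ 0 ∨ f 2 ≠ 0 := by
    obtain ⟨i, hi1, hi2, hfi⟩ := hf
    interval_cases i <;> simp [hfi]
  have hg' : g 1 ≠ 0 ∨ g 2 ≠ 0 := by
    obtain ⟨i, hi1, hi2, hgi⟩ := hg
    interval_cases i <;> simp [hgi]
  rw [satisfiesAB_two_iff, mul_eq_zero, mul_eq_zero]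
  tauto

end

theorem nilCoxeter_two_truncated_point_modules_general
    (k : Type*) [Field k] (n : ℕ)
    (lam0 lam1 : ℕ → k)
    (h0 : ∃ i, 1 ≤ i ∧ i ≤ n - 1 ∧ lam0 i ≠ 0)
    (h1 : ∃ i, 1 ≤ i ∧ i ≤ n - 1 ∧ lam1 i ≠ 0) :
    (((∀ i, 1 ≤ i → i ≤ n - 1 → lam1 i * lam0 i = 0) ∧
      (∀ i j, 1 ≤ i → i ≤ n - 1 → 1 ≤ j → j ≤ n - 1 → (i + 1 < j ∨ j + 1 < i) →
        lam1 i * lam0 j - lam1 j * lam0 i = 0)) ↔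
      (∃ i, 1 ≤ i ∧ i ≤ n - 1 ∧
        ((lam0 i ≠ 0 ∧ (∀ p, 1 ≤ p → p ≤ n - 1 → p ≠ i → lam0 p = 0) ∧
            (∀ p, 1 ≤ p → p ≤ n - 1 → p ≠ i - 1 → p ≠ i + 1 → lam1 p = 0)) ∨
          (lam1 i ≠ 0 ∧ (∀ p, 1 ≤ p → p ≤ n - 1 → p ≠ i → lam1 p = 0) ∧
            (∀ p, 1 ≤ p → p ≤ n - 1 → p ≠ i - 1 → p ≠ i + 1 → lam0 p = 0))))) ∧
    (n = 3 →
      (((∀ i, 1 ≤ i → i ≤ n - 1 → lam1 i * lam0 i = 0) ∧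
        (∀ i j, 1 ≤ i → i ≤ n - 1 → 1 ≤ j → j ≤ n - 1 → (i + 1 < j ∨ j + 1 < i) →
          lam1 i * lam0 j - lam1 j * lam0 i = 0)) ↔
        ((lam0 1 ≠ 0 ∧ lam0 2 = 0 ∧ lam1 1 = 0 ∧ lam1 2 ≠ 0) ∨
          (lam0 1 = 0 ∧ lam0 2 ≠ 0 ∧ lam1 1 ≠ 0 ∧ lam1 2 = 0)))) := by
  refine ⟨satisfiesAB_iff_exists_isConcentratedPair h0 h1, ?_⟩
  rintro rfl
  exact satisfiesAB_two_iff_of_ne_zero h0 h1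

/-- For `n ≥ 3`, a pair `(λ^0, λ^1)` of nonzero vectors in `k^{n-1}` (recorded as
functions `ℕ → k` with only entries `1 ≤ i ≤ n - 1` relevant) satisfies equations (A)
and (B) iff for some index `1 ≤ i ≤ n - 1`, one of the vectors has support exactly
`{i}` and the other has support contained in `{i-1, i+1} ∩ {1, …, n-1}`. In particular,
for `n = 3` the solutions up to rescaling are exactly `(e_1, e_2)` and `(e_2, e_1)`. -/
theorem nilCoxeter_two_truncated_point_modules
    (k : Type*) [Field k] [IsAlgClosed k] (n : ℕ) (hn : 3 ≤ n)
    (lam0 lam1 : ℕ → k)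
    (h0 : ∃ i, 1 ≤ i ∧ i ≤ n - 1 ∧ lam0 i ≠ 0)
    (h1 : ∃ i, 1 ≤ i ∧ i ≤ n - 1 ∧ lam1 i ≠ 0) :
    (((∀ i, 1 ≤ i → i ≤ n - 1 → lam1 i * lam0 i = 0) ∧
      (∀ i j, 1 ≤ i → i ≤ n - 1 → 1 ≤ j → j ≤ n - 1 → (i + 1 < j ∨ j + 1 < i) →
        lam1 i * lam0 j - lam1 j * lam0 i = 0)) ↔
      (∃ i, 1 ≤ i ∧ i ≤ n - 1 ∧
        ((lam0 i ≠ 0 ∧ (∀ p, 1 ≤ p → p ≤ n - 1 → p ≠ i → lam0 p = 0) ∧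
            (∀ p, 1 ≤ p → p ≤ n - 1 → p ≠ i - 1 → p ≠ i + 1 → lam1 p = 0)) ∨
          (lam1 i ≠ 0 ∧ (∀ p, 1 ≤ p → p ≤ n - 1 → p ≠ i → lam1 p = 0) ∧
            (∀ p, 1 ≤ p → p ≤ n - 1 → p ≠ i - 1 → p ≠ i + 1 → lam0 p = 0))))) ∧
    (n = 3 →
      (((∀ i, 1 ≤ i → i ≤ n - 1 → lam1 i * lam0 i = 0) ∧
        (∀ i j, 1 ≤ i → i ≤ n - 1 → 1 ≤ j → j ≤ n - 1 → (i + 1 < j ∨ j + 1 < i) →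
          lam1 i * lam0 j - lam1 j * lam0 i = 0)) ↔
        ((lam0 1 ≠ 0 ∧ lam0 2 = 0 ∧ lam1 1 = 0 ∧ lam1 2 ≠ 0) ∨
          (lam0 1 = 0 ∧ lam0 2 ≠ 0 ∧ lam1 1 ≠ 0 ∧ lam1 2 = 0)))) :=
  nilCoxeter_two_truncated_point_modules_general k n lam0 lam1 h0 h1
end

section
/- Let n ≥ 2 and let K_{1,n} be the star graph with center vertex 0 and leaf vertices 1, …, n, viewed as a subgraph of the complete graph on the vertex set {0, 1, …, n}. Then for every d ≥ n+1 there is no d-truncated point module datum over the generalized Fomin–Kirillov algebra E_{K_{1,n}} (the subalgebra of E_{n+1} generated by x_{0,1}, …, x_{0,n}); equivalently, E_{K_{1,n}} admits no truncated point modules of degree greater than n. -/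
noncomputable section

open FreeAlgebra

/-- The star graph `K_{1,n}` on `{0, 1, …, n}` with center `0`. -/
def starGraph (n : ℕ) : SimpleGraph (Fin (n + 1)) :=
  SimpleGraph.fromRel fun a _ => a = 0

/-!
The star generators `x₀₁, …, x₀ₙ` of `E_{n+1}` satisfy the cyclic relations
`∑ₖ yₖ yₖ₊₁ ⋯ y_r y₁ ⋯ yₖ₋₁ yₖ = 0` for distinct `y₁, …, y_r`. This follows by induction on `r`:
for distinct leaves `p, q`, the element `x_pq` commutes with every other star generator and
satisfies `x_pq x₀ₚ = x₀_q x_pq + x₀ₚ x₀_q`, so multiplying the relation for `p, y₂, …` by `x_pq`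
produces the one for `p, q, y₂, …` from the one for `q, y₂, …`.

In a `d`-truncated point module, `x_e` moves level `j` to level `j + 1` with weight `λ_e^j`.
If some `e` had `λ_e^j ≠ 0 ≠ λ_e^{j'}` with `j < j'` and `j' - j` minimal, then nonzero generators
chosen at the intermediate levels are distinct and differ from `e`, and in their cyclic relation
exactly one word, `e ⋯ e`, acts nontrivially from level `j` to level `j' + 1`. So each of the `n`
generators is nonzero on at most one of the `d ≥ n + 1` levels, while every level needs one.
-/

namespace FominKirillov

section CyclicSum

variable {R : Type*} [Ring R] {I : Type*}

/-- `cyclicSum a [y₁, …, yₘ] = ∑ₖ yₖ yₖ₊₁ ⋯ yₘ y₁ ⋯ yₖ₋₁ yₖ` (writing `y` for `a y`);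
`cyclicSumWith a L X` inserts the factor `X` where each rotated word wraps around. -/
def cyclicSumWith (a : I → R) : List I → R → R
  | [], _ => 0
  | p :: M, X => a p * (M.map a).prod * X * a p + cyclicSumWith a M (X * a p)

def cyclicSum (a : I → R) (L : List I) : R := cyclicSumWith a L 1

lemma cyclicSumWith_add (a : I → R) (L : List I) (X Y : R) :
    cyclicSumWith a L (X + Y) = cyclicSumWith a L X + cyclicSumWith a L Y := by
  induction L generalizing X Y with
  | nil => simp [cyclicSumWith]
  | cons p M ih =>
    simp only [cyclicSumWith, add_mul, mul_add, ih]
    abel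

lemma mul_cyclicSumWith {a : I → R} {c : R} {L : List I} (hc : ∀ x ∈ L, Commute c (a x))
    (X : R) : c * cyclicSumWith a L X = cyclicSumWith a L (c * X) := by
  induction L generalizing X with
  | nil => simp [cyclicSumWith]
  | cons p M ih =>
    obtain ⟨hp, hM⟩ := List.forall_mem_cons.mp hc
    have hcM : Commute c (M.map a).prod :=
      Commute.list_prod_right _ _ (List.forall_mem_map.mpr hM)
    simp only [cyclicSumWith, mul_add, ih hM, ← mul_assoc, hp.eq]
    rw [mul_assoc (a p) c, hcM.eq, ← mul_assoc]

lemma cyclicSumWith_mul {a : I → R} {c : R} {L : List I} (hc : ∀ x ∈ L, Commute c (a x))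
    (X : R) : cyclicSumWith a L (X * c) = cyclicSumWith a L X * c := by
  induction L generalizing X with
  | nil => simp [cyclicSumWith]
  | cons p M ih =>
    obtain ⟨hp, hM⟩ := List.forall_mem_cons.mp hc
    simp only [cyclicSumWith, add_mul, mul_assoc, hp.eq, ← ih hM]

lemma map_cyclicSumWith {S F : Type*} [Ring S] [FunLike F R S] [RingHomClass F R S] (φ : F)
    (a : I → R) (L : List I) (X : R) :
    φ (cyclicSumWith a L X) = cyclicSumWith (fun i => φ (a i)) L (φ X) := by
  induction L generalizing X with
  | nil => simp [cyclicSumWith]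
  | cons p M ih => simp [cyclicSumWith, ih, map_list_prod, Function.comp_def]

lemma map_cyclicSum {S F : Type*} [Ring S] [FunLike F R S] [RingHomClass F R S] (φ : F)
    (a : I → R) (L : List I) : φ (cyclicSum a L) = cyclicSum (fun i => φ (a i)) L := by
  simp [cyclicSum, map_cyclicSumWith]

lemma mul_cyclicSum_cons {a : I → R} {c : R} {p q : I} {M : List I}
    (hc : ∀ x ∈ M, Commute c (a x)) (hrel : c * a p = a q * c + a p * a q) :
    c * cyclicSum a (p :: M) = cyclicSum a (q :: M) * c + cyclicSum a (p :: q :: M) := by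
  set P := (M.map a).prod
  have hcP : Commute c P := Commute.list_prod_right _ _ (List.forall_mem_map.mpr hc)
  have hword : c * (a p * P * a p) = a q * P * a q * c + a q * P * (a p * a q) +
      a p * (a q * P) * a p := by
    calc c * (a p * P * a p) = (c * a p) * P * a p := by simp only [mul_assoc]
      _ = a q * (c * P) * a p + a p * a q * P * a p := by
        rw [hrel]; simp only [add_mul, mul_assoc]
      _ = a q * P * (c * a p) + a p * a q * P * a p := by
        rw [hcP.eq]; simp only [mul_assoc]
      _ = _ := by rw [hrel]; simp only [mul_add, mul_assoc]
  simp only [cyclicSum, cyclicSumWith, List.map_cons, List.prod_cons, mul_one, one_mul]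
  rw [mul_add, mul_cyclicSumWith hc, hrel, cyclicSumWith_add, cyclicSumWith_mul hc, hword]
  simp only [add_mul, mul_assoc]
  abel

theorem cyclicSum_eq_zero {a : I → R} (hsq : ∀ i, a i * a i = 0)
    (hpair : ∀ p q, p ≠ q → ∃ c : R,
      (∀ l, l ≠ p → l ≠ q → Commute c (a l)) ∧ c * a p = a q * c + a p * a q)
    {L : List I} (hL : L.Nodup) : cyclicSum a L = 0 := by
  suffices h : ∀ M : List I, ∀ p, (p :: M).Nodup → cyclicSum a (p :: M) = 0 by
    cases L with
    | nil => rfl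
    | cons p M => exact h M p hL
  intro M
  induction M with
  | nil => simp [cyclicSum, cyclicSumWith, hsq]
  | cons q M ih =>
    intro p hpqM
    obtain ⟨hp, hqM⟩ := List.nodup_cons.mp hpqM
    have hpM : (p :: M).Nodup := List.nodup_cons.mpr ⟨fun h => hp (by simp [h]), hqM.of_cons⟩
    obtain ⟨c, hc, hrel⟩ := hpair p q (fun h => hp (by simp [h]))
    have hcM : ∀ x ∈ M, Commute c (a x) := fun x hx =>
      hc x (fun h => hp (by simp [← h, hx])) (fun h => (List.nodup_cons.mp hqM).1 (h ▸ hx))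
    have := mul_cyclicSum_cons hcM hrel
    rwa [ih p hpM, ih q hqM, mul_zero, zero_mul, zero_add, eq_comm] at this

end CyclicSum

section Relations

variable (k : Type*) [Field k] {m : ℕ}

lemma fkGen_mul_self (e : GenIdx m) : fkGen k m e * fkGen k m e = 0 := by
  rw [fkGen, ← map_mul, RingQuot.mkAlgHom_rel k (FKRel.sq e), map_zero]

lemma fkGen_commute {e f : GenIdx m} (h1 : e.1.1 ≠ f.1.1) (h2 : e.1.1 ≠ f.1.2)
    (h3 : e.1.2 ≠ f.1.1) (h4 : e.1.2 ≠ f.1.2) : Commute (fkGen k m e) (fkGen k m f) := by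
  have h := RingQuot.mkAlgHom_rel k (FKRel.comm (k := k) e f h1 h2 h3 h4)
  rwa [map_sub, map_mul, map_mul, map_zero, sub_eq_zero] at h

lemma fkGen_tri1 {i j l : Fin m} (hij : i < j) (hjl : j < l) :
    fkGen k m ⟨(i, j), hij⟩ * fkGen k m ⟨(j, l), hjl⟩ =
      fkGen k m ⟨(j, l), hjl⟩ * fkGen k m ⟨(i, l), hij.trans hjl⟩ +
      fkGen k m ⟨(i, l), hij.trans hjl⟩ * fkGen k m ⟨(i, j), hij⟩ := by
  have h := RingQuot.mkAlgHom_rel k (FKRel.tri1 (k := k) i j l hij hjl)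
  rwa [map_sub, map_sub, map_mul, map_mul, map_mul, map_zero, sub_sub, sub_eq_zero] at h

lemma fkGen_tri2 {i j l : Fin m} (hij : i < j) (hjl : j < l) :
    fkGen k m ⟨(j, l), hjl⟩ * fkGen k m ⟨(i, j), hij⟩ =
      fkGen k m ⟨(i, l), hij.trans hjl⟩ * fkGen k m ⟨(j, l), hjl⟩ +
      fkGen k m ⟨(i, j), hij⟩ * fkGen k m ⟨(i, l), hij.trans hjl⟩ := by
  have h := RingQuot.mkAlgHom_rel k (FKRel.tri2 (k := k) i j l hij hjl)
  rwa [map_sub, map_sub, map_mul, map_mul, map_mul, map_zero, sub_sub, sub_eq_zero] at h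

/-- The witness is `x_uv` if `u < v` and `-x_vu` if `v < u`. -/
lemma exists_fkGen_star_relation {e f : GenIdx m} (hef : e ≠ f) (hcenter : e.1.1 = f.1.1) :
    ∃ c : FK k m, (∀ g : GenIdx m, g.1.1 = e.1.1 → g ≠ e → g ≠ f → Commute c (fkGen k m g)) ∧
      c * fkGen k m e = fkGen k m f * c + fkGen k m e * fkGen k m f := by
  obtain ⟨⟨i, u⟩, hiu⟩ := e
  obtain ⟨⟨i', v⟩, hiv⟩ := f
  obtain rfl : i = i' := hcenter
  have huv : u ≠ v := fun h => hef (by subst h; rfl)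
  have hcomm : ∀ {u v : Fin m} (huv : u < v), i < u → ∀ g : GenIdx m, g.1.1 = i →
      g.1.2 ≠ u → g.1.2 ≠ v → Commute (fkGen k m ⟨(u, v), huv⟩) (fkGen k m g) := by
    intro u v huv hiu g hg hgu hgv
    refine (fkGen_commute k ?_ ?_ hgu hgv).symm
    · rw [hg]; exact hiu.ne
    · rw [hg]; exact (hiu.trans huv).ne
  have hne : ∀ {g : GenIdx m} {w : Fin m} (hiw : i < w), g.1.1 = i → g ≠ ⟨(i, w), hiw⟩ →
      g.1.2 ≠ w := fun _ hg hgw hgw' => hgw (Subtype.ext (Prod.ext hg hgw'))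
  rcases huv.lt_or_gt with hlt | hlt
  · refine ⟨fkGen k m ⟨(u, v), hlt⟩, fun g hg hge hgf => ?_, fkGen_tri2 k hiu hlt⟩
    exact hcomm hlt hiu g hg (hne hiu hg hge) (hne hiv hg hgf)
  · refine ⟨-fkGen k m ⟨(v, u), hlt⟩, fun g hg hge hgf => ?_, ?_⟩
    · exact (hcomm hlt hiv g hg (hne hiv hg hgf) (hne hiu hg hge)).neg_left
    · rw [neg_mul (fkGen k m _) _, mul_neg (fkGen k m _) _, fkGen_tri1 k hiv hlt]
      abel

theorem cyclicSum_fkGen_eq_zero {G : SimpleGraph (Fin m)} {i : Fin m}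
    (hG : ∀ e : EdgeIdx m G, e.1.1.1 = i) {L : List (EdgeIdx m G)} (hL : L.Nodup) :
    cyclicSum (fun e => fkGen k m e.1) L = 0 := by
  refine cyclicSum_eq_zero (a := fun e => fkGen k m e.1) (fun e => fkGen_mul_self k e.1)
    (fun p q hpq => ?_) hL
  have hpq' : p.1 ≠ q.1 := fun h => hpq (Subtype.ext h)
  obtain ⟨c, hc, hrel⟩ := exists_fkGen_star_relation k hpq' ((hG p).trans (hG q).symm)
  refine ⟨c, fun l hlp hlq => ?_, hrel⟩
  exact hc l.1 ((hG l).trans (hG p).symm) (fun h => hlp (Subtype.ext h))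
    (fun h => hlq (Subtype.ext h))

end Relations

section Matrices

variable {k : Type*} [Field k] {E : Type*} (lam : ℕ → E → k) (d : ℕ)

def psiMats (e : E) : Matrix (Fin (d + 1)) (Fin (d + 1)) k := psiMat k d fun j => lam j e

def wordCoeff (s : ℕ) : List E → k
  | [] => 1
  | e :: W => lam (s + W.length) e * wordCoeff s W

lemma wordCoeff_append (s : ℕ) (A B : List E) :
    wordCoeff lam s (A ++ B) = wordCoeff lam (s + B.length) A * wordCoeff lam s B := by
  induction A with
  | nil => simp [wordCoeff]
  | cons e A ih =>
    simp only [List.cons_append, wordCoeff, ih, List.length_append, mul_assoc]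
    rw [Nat.add_assoc, Nat.add_comm B.length]

lemma wordCoeff_reverse_range_map (s g : ℕ) (f : ℕ → E) :
    wordCoeff lam s ((List.range g).map f).reverse = ∏ i ∈ Finset.range g, lam (s + i) (f i) := by
  induction g with
  | zero => simp [wordCoeff]
  | succ g ih =>
    rw [List.range_succ, List.map_append, List.reverse_append, Finset.prod_range_succ, mul_comm]
    simp [wordCoeff, ih]

lemma prod_psiMats_apply (W : List E) (r s : Fin (d + 1)) :
    (W.map (psiMats lam d)).prod r s =
      if (r : ℕ) = s + W.length then wordCoeff lam s W else 0 := by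
  induction W generalizing r with
  | nil => simp [wordCoeff, Matrix.one_apply, Fin.ext_iff]
  | cons e W ih =>
    simp only [List.map_cons, List.prod_cons, Matrix.mul_apply, ih, psiMats, psiMat,
      Matrix.of_apply, List.length_cons, wordCoeff]
    by_cases hr : (r : ℕ) = s + W.length + 1
    · rw [if_pos (by omega), Finset.sum_eq_single ⟨s + W.length, by omega⟩]
      · simp [hr]
      · intro t _ ht
        rw [if_neg (fun h => ht (Fin.ext h)), mul_zero]
      · simp
    · rw [if_neg (by omega)]
      refine Finset.sum_eq_zero fun t _ => ?_
      split_ifs <;> first | omega | simp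

lemma cyclicSumWith_psiMats_apply_eq_zero (e₀ : E) (T W : List E) (r s : Fin (d + 1))
    (hz : ∀ i < T.length, lam (s + W.length + 1 + i) e₀ = 0) :
    cyclicSumWith (psiMats lam d) T ((e₀ :: W).map (psiMats lam d)).prod r s = 0 := by
  induction T generalizing W with
  | nil => simp [cyclicSumWith]
  | cons p M ih =>
    have hword : psiMats lam d p * (M.map (psiMats lam d)).prod *
        ((e₀ :: W).map (psiMats lam d)).prod * psiMats lam d p =
        (((p :: M) ++ e₀ :: (W ++ [p])).map (psiMats lam d)).prod := by
      simp [mul_assoc]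
    have hcoeff : wordCoeff lam s ((p :: M) ++ e₀ :: (W ++ [p])) = 0 := by
      have h0 : lam (s + (W.length + 1)) e₀ = 0 := by simpa [add_assoc] using hz 0 (by simp)
      simp [wordCoeff_append, wordCoeff, h0]
    have htail : ((e₀ :: W).map (psiMats lam d)).prod * psiMats lam d p =
        ((e₀ :: (W ++ [p])).map (psiMats lam d)).prod := by
      simp [mul_assoc]
    rw [cyclicSumWith, Matrix.add_apply, hword, prod_psiMats_apply, hcoeff, ite_self,
      htail, ih]
    · simp
    intro i hi
    convert hz (i + 1) (by simpa using hi) using 2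
    simp only [List.length_append, List.length_singleton]
    omega

lemma cyclicSum_psiMats_cons_apply (e₀ : E) (T : List E) (s : ℕ) (hs : s + T.length + 2 ≤ d)
    (hz : ∀ i < T.length, lam (s + 1 + i) e₀ = 0) :
    cyclicSum (psiMats lam d) (e₀ :: T) ⟨s + T.length + 2, by omega⟩ ⟨s, by omega⟩ =
      lam (s + T.length + 1) e₀ * wordCoeff lam (s + 1) T * lam s e₀ := by
  have hword : psiMats lam d e₀ * (T.map (psiMats lam d)).prod * 1 * psiMats lam d e₀ =
      ((e₀ :: T ++ [e₀]).map (psiMats lam d)).prod := by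
    simp [mul_assoc]
  have hseam : 1 * psiMats lam d e₀ = ([e₀].map (psiMats lam d)).prod := by simp
  rw [cyclicSum, cyclicSumWith, Matrix.add_apply, hword, prod_psiMats_apply, hseam,
    cyclicSumWith_psiMats_apply_eq_zero lam d e₀ T [] _ _ (by simpa using hz), add_zero,
    if_pos (by simp; omega), wordCoeff_append]
  simp only [wordCoeff, List.length_cons, List.length_nil, add_zero, mul_one]
  rw [add_right_comm]

variable {lam d} in
theorem weight_eq_zero_of_lt (hcyc : ∀ L : List E, L.Nodup → cyclicSum (psiMats lam d) L = 0)
    (hnz : ∀ t < d, ∃ e, lam t e ≠ 0) {e : E} {j j' : ℕ} (hjj' : j < j') (hj' : j' < d)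
    (he : lam j e ≠ 0) : lam j' e = 0 := by
  suffices key : ∀ g j (e : E), j + g + 1 < d → lam j e ≠ 0 → lam (j + g + 1) e = 0 by
    obtain ⟨g, rfl⟩ : ∃ g, j' = j + g + 1 := ⟨j' - j - 1, by omega⟩
    exact key g j e hj' he
  intro g
  induction g using Nat.strong_induction_on with
  | _ g ih =>
  intro j e hd he
  by_contra he'
  have hsep : ∀ t t' f, j ≤ t → t < t' → t' ≤ j + g → lam t f ≠ 0 → lam t' f = 0 := by
    intro t t' f ht htt' ht' hf
    obtain ⟨m, rfl⟩ : ∃ m, t' = t + m + 1 := ⟨t' - t - 1, by omega⟩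
    exact ih m (by omega) t f (by omega) hf
  have : Nonempty E := ⟨e⟩
  choose! pick hpick using hnz
  set T := ((List.range g).map fun i => pick (j + 1 + i)).reverse with hT
  have hTlen : T.length = g := by simp [T]
  have hz : ∀ i < T.length, lam (j + 1 + i) e = 0 := fun i hi =>
    hsep j _ e le_rfl (by omega) (by omega) he
  have hnodup : (e :: T).Nodup := by
    rw [List.nodup_cons, hT, List.mem_reverse, List.nodup_reverse]
    constructor
    · simp only [List.mem_map, List.mem_range, not_exists, not_and]
      intro i hi hpe
      exact hpick (j + 1 + i) (by omega) (hpe ▸ hz i (by omega))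
    · refine List.Nodup.map_on (fun i hi i' hi' h => ?_) List.nodup_range
      rw [List.mem_range] at hi hi'
      by_contra hne
      rcases lt_or_gt_of_ne hne with hlt | hlt
      · exact hpick _ (by omega) (h ▸ hsep _ _ _ (by omega) (by omega) (by omega)
          (hpick _ (by omega)))
      · exact hpick _ (by omega) (h.symm ▸ hsep _ _ _ (by omega) (by omega) (by omega)
          (hpick _ (by omega)))
  have hentry := cyclicSum_psiMats_cons_apply lam d e T j (by omega) hz
  have hword : wordCoeff lam (j + 1) T ≠ 0 := by
    rw [hT, wordCoeff_reverse_range_map]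
    exact Finset.prod_ne_zero_iff.mpr fun i hi => hpick _ (by simp at hi; omega)
  rw [hcyc _ hnodup, Matrix.zero_apply, hTlen] at hentry
  exact mul_ne_zero (mul_ne_zero he' hword) he hentry.symm

end Matrices

section PointModules

variable {k : Type*} [Field k] {m d : ℕ} {G : SimpleGraph (Fin m)}

lemma _root_.IsTPMDatum.cyclicSum_psiMats_eq_zero {lam : ℕ → EdgeIdx m G → k}
    (h : IsTPMDatum k m d G lam)
    {L : List (EdgeIdx m G)} (hL : cyclicSum (fun e => fkGen k m e.1) L = 0) :
    cyclicSum (psiMats lam d) L = 0 := by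
  have hfk : (fun e => toFK k m G (ι k e)) = fun e => fkGen k m e.1 :=
    funext fun e => by simp [toFK]
  have hψ : (fun e => toMatrices k m d G lam (ι k e)) = psiMats lam d :=
    funext fun e => by simp [toMatrices, psiMats]
  have := h.2 (cyclicSum (ι k) L) (by rwa [map_cyclicSum, hfk])
  rwa [map_cyclicSum, hψ] at this

lemma starGraph_edge_fst {n : ℕ} (e : EdgeIdx (n + 1) (starGraph n)) : e.1.1.1 = 0 := by
  have h := e.2
  simp only [starGraph, SimpleGraph.fromRel_adj] at h
  exact h.2.resolve_right fun h0 => Fin.not_lt_zero _ (h0 ▸ e.1.2)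

lemma starGraph_edge_ext {n : ℕ} {e f : EdgeIdx (n + 1) (starGraph n)}
    (h : e.1.1.2 = f.1.1.2) : e = f :=
  Subtype.ext <| Subtype.ext <|
    Prod.ext ((starGraph_edge_fst e).trans (starGraph_edge_fst f).symm) h

end PointModules

end FominKirillov

open FominKirillov in
theorem star_no_truncated_point_modules_general (k : Type*) [Field k]
    (n d : ℕ) (hd : n + 1 ≤ d) :
    ¬ ∃ lam : ℕ → EdgeIdx (n + 1) (starGraph n) → k,
      IsTPMDatum k (n + 1) d (starGraph n) lam := by
  rintro ⟨lam, hlam⟩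
  have hcyc : ∀ L, L.Nodup → cyclicSum (psiMats lam d) L = 0 := fun L hL =>
    hlam.cyclicSum_psiMats_eq_zero (cyclicSum_fkGen_eq_zero k starGraph_edge_fst hL)
  choose F hF using fun t : Fin (n + 1) => hlam.1 t (by omega)
  have hF_inj : Function.Injective F := by
    intro s t hst
    by_contra hne
    rcases lt_or_gt_of_ne hne with hlt | hlt
    · exact hF t (hst ▸ weight_eq_zero_of_lt hcyc hlam.1 hlt (by omega) (hF s))
    · exact hF s (hst ▸ weight_eq_zero_of_lt hcyc hlam.1 hlt (by omega) (hF t))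
  have hleaf_inj : Function.Injective fun t => (F t).1.1.2 := fun s t h =>
    hF_inj (starGraph_edge_ext h)
  obtain ⟨t, ht : (F t).1.1.2 = 0⟩ := Finite.injective_iff_surjective.mp hleaf_inj 0
  exact Fin.not_lt_zero _ (ht ▸ (F t).1.2)

/-- For `n ≥ 2`, the generalized Fomin–Kirillov algebra `E_{K_{1,n}} ⊆ E_{n+1}` of the
star graph admits no `d`-truncated point module for any `d ≥ n + 1`. -/
theorem star_no_truncated_point_modules (k : Type*) [Field k] [IsAlgClosed k]
    (n d : ℕ) (hn : 2 ≤ n) (hd : n + 1 ≤ d) :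
    ¬ ∃ lam : ℕ → EdgeIdx (n + 1) (starGraph n) → k,
      IsTPMDatum k (n + 1) d (starGraph n) lam :=
  star_no_truncated_point_modules_general k n d hd
end
end
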